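/- arXiv:2604.02357 — 9 statements merged into one kernel-verified Lean document; each statement's English description precedes it below -/
import Mathlib

section
/- Let n ≥ 1, s ∈ (0,1) and ε > 0. Suppose φ : ℝⁿ → ℝ is continuous, vanishes at infinity, φ(y) = 0 for all |y| ≤ ε, and ∫_{ℝⁿ} φ(y) · |y − x|^{-(n+2s)} dy = 0 for every x with |x| < ε. Then for every m ∈ ℕ and every multi-index β ∈ ℕ₀ⁿ with |β| ≤ m one has ∫_{ℝⁿ} φ(y) · y^β · |y|^{-(2m+n+2s)} dy = 0 (where y^β = y₁^{β₁}⋯yₙ^{βₙ}). -/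
/-!
For `‖x‖ < ε` put `K_{β,c}(x) = ∫ φ(y) (y - x)^β |y - x|^{-c} dy` (`rieszMoment φ β c x`).
Since `φ` vanishes near the singularity, differentiation under the integral sign in the direction
`e_i` is legitimate and gives `∂_i K_{β,c} = c K_{β+e_i,c+2} - β_i K_{β-e_i,c}`.
Induction on `k` then shows that `K_{β,n+2s+2k}` vanishes on the ball for `|β| ≤ k`: if `K_{β,c}`
and `K_{β-e_i,c}` vanish there, so does `K_{β+e_i,c+2}`; and since `∑ (y - x)_i² = |y - x|²`,
summing `∂_i K_{e_i,c} = c K_{2e_i,c+2} - K_{0,c}` over `i` gives `(c - n) K_{0,c} = 0`.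
The theorem is the case `x = 0`.
-/

open MeasureTheory Filter
open scoped RealInnerProductSpace Topology

theorem HasDerivAt.norm_rpow {F : Type*} [NormedAddCommGroup F] [InnerProductSpace ℝ F]
    {f : ℝ → F} {f' : F} {t : ℝ} (hf : HasDerivAt f f' t) (ht : f t ≠ 0) (p : ℝ) :
    HasDerivAt (fun τ => ‖f τ‖ ^ p) (p * ‖f t‖ ^ (p - 2) * ⟪f t, f'⟫) t := by
  have sq_rpow : ∀ (u : ℝ) (q : ℝ), 0 ≤ u → (u ^ 2) ^ (q / 2) = u ^ q := fun u q hu => by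
    rw [← Real.rpow_natCast, ← Real.rpow_mul hu]
    ring_nf
  have h := hf.norm_sq.rpow_const (p := p / 2) (Or.inl (by positivity))
  simp only [sq_rpow _ _ (norm_nonneg _)] at h
  convert h using 1
  rw [show p / 2 - 1 = (p - 2) / 2 by ring, sq_rpow _ _ (norm_nonneg _)]
  ring

theorem continuous_mul_comp_sub_of_eventuallyEq_zero {E : Type*} [NormedAddCommGroup E]
    {φ g : E → ℝ} {x : E} (hφ : Continuous φ) (hφx : φ =ᶠ[𝓝 x] 0) (hg : ContinuousOn g {0}ᶜ) :
    Continuous fun y => φ y * g (y - x) := by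
  refine continuous_iff_continuousAt.2 fun y => ?_
  rcases eq_or_ne y x with rfl | hyx
  · refine EventuallyEq.continuousAt (y := 0) (hφx.mono fun z hz => ?_)
    simp only [hz, Pi.zero_apply, zero_mul]
  · have hgy : ContinuousAt g (y - x) :=
      hg.continuousAt (isOpen_compl_singleton.mem_nhds (sub_ne_zero.2 hyx))
    exact hφ.continuousAt.mul (hgy.comp (f := fun z => z - x) (by fun_prop))

theorem eventually_norm_add_smul_lt {E : Type*} [SeminormedAddCommGroup E] [NormedSpace ℝ E]
    {x : E} {r : ℝ} (hx : ‖x‖ < r) (v : E) : ∀ᶠ t in 𝓝 (0 : ℝ), ‖x + t • v‖ < r := by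
  have : Tendsto (fun t : ℝ => ‖x + t • v‖) (𝓝 0) (𝓝 ‖x‖) := by
    simpa using ((by fun_prop : Continuous fun t : ℝ => ‖x + t • v‖).tendsto 0)
  exact this.eventually (gt_mem_nhds hx)

theorem hasDerivAt_zero_of_forall_norm_lt_eq_zero {E F : Type*} [SeminormedAddCommGroup E]
    [NormedSpace ℝ E] [NormedAddCommGroup F] [NormedSpace ℝ F] {f : E → F} {ε : ℝ}
    (h : ∀ y, ‖y‖ < ε → f y = 0) {x : E} (hx : ‖x‖ < ε) (v : E) :
    HasDerivAt (fun t : ℝ => f (x + t • v)) 0 0 :=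
  (hasDerivAt_const _ _).congr_of_eventuallyEq
    ((eventually_norm_add_smul_lt hx v).mono fun _ ht => h _ ht)

theorem norm_sub_le_one_add_mul_one_add_norm {E : Type*} [SeminormedAddCommGroup E]
    {x y : E} {r : ℝ} (hx : ‖x‖ ≤ r) : ‖y - x‖ ≤ (1 + r) * (1 + ‖y‖) := by
  nlinarith [norm_sub_le y x, norm_nonneg x, norm_nonneg y]

theorem div_one_add_mul_one_add_norm_le_norm_sub {E : Type*} [SeminormedAddCommGroup E]
    {x y : E} {r ε : ℝ} (hr : r < ε) (hx : ‖x‖ ≤ r) (hy : ε ≤ ‖y‖) :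
    (ε - r) / (1 + ε) * (1 + ‖y‖) ≤ ‖y - x‖ := by
  have hε : 0 < 1 + ε := by linarith [norm_nonneg x]
  rw [div_mul_eq_mul_div, div_le_iff₀ hε]
  nlinarith [norm_sub_norm_le y x, norm_nonneg x]

namespace FractionalUCP

theorem sub_single_add_single {ι : Type*} [DecidableEq ι] {γ : ι → ℕ} {i : ι} (hi : γ i ≠ 0) :
    γ - Pi.single i 1 + Pi.single i 1 = γ := by
  ext j
  rcases eq_or_ne j i with rfl | hj
  · simp only [Pi.add_apply, Pi.sub_apply, Pi.single_eq_same]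
    omega
  · simp [hj]

variable {ι : Type*} [Fintype ι]

def monomial (β : ι → ℕ) (z : EuclideanSpace ℝ ι) : ℝ := ∏ i, z i ^ β i

noncomputable def monomialKernel (β : ι → ℕ) (c : ℝ) (z : EuclideanSpace ℝ ι) : ℝ :=
  monomial β z * ‖z‖ ^ (-c)

noncomputable def rieszMoment (φ : EuclideanSpace ℝ ι → ℝ) (β : ι → ℕ) (c : ℝ)
    (x : EuclideanSpace ℝ ι) : ℝ :=
  ∫ y, φ y * monomialKernel β c (y - x)

theorem abs_monomial_le (β : ι → ℕ) (z : EuclideanSpace ℝ ι) :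
    |monomial β z| ≤ ‖z‖ ^ ∑ i, β i := by
  rw [monomial, Finset.abs_prod, ← Finset.prod_pow_eq_pow_sum]
  gcongr with i
  rw [abs_pow, ← Real.norm_eq_abs]
  gcongr
  exact PiLp.norm_apply_le z i

theorem continuous_monomial (β : ι → ℕ) :
    Continuous (monomial β : EuclideanSpace ℝ ι → ℝ) := by
  unfold monomial
  fun_prop

@[simp]
theorem monomial_zero (z : EuclideanSpace ℝ ι) : monomial 0 z = 1 := by
  simp [monomial]

theorem continuousOn_monomialKernel (β : ι → ℕ) (c : ℝ) :
    ContinuousOn (monomialKernel β c : EuclideanSpace ℝ ι → ℝ) {0}ᶜ :=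
  (continuous_monomial β).continuousOn.mul
    (continuous_norm.continuousOn.rpow_const fun _ hz => Or.inl (norm_ne_zero_iff.2 hz))

theorem abs_monomialKernel_le (β : ι → ℕ) (c : ℝ) (z : EuclideanSpace ℝ ι) :
    |monomialKernel β c z| ≤ ‖z‖ ^ (∑ i, β i) * ‖z‖ ^ (-c) := by
  rw [monomialKernel, abs_mul, abs_of_nonneg (Real.rpow_nonneg (norm_nonneg z) _)]
  gcongr
  exact abs_monomial_le β z

section DecidableEq

variable [DecidableEq ι]

theorem monomial_add_single (β : ι → ℕ) (i : ι) (z : EuclideanSpace ℝ ι) :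
    monomial (β + Pi.single i 1) z = z i * monomial β z := by
  simp only [monomial, Pi.add_apply, pow_add, Finset.prod_mul_distrib]
  rw [mul_comm, Finset.prod_eq_single i (fun j _ hj => by simp [hj]) (by simp)]
  simp

theorem monomial_sub_smul_single (β : ι → ℕ) (i : ι) (w : EuclideanSpace ℝ ι) (t : ℝ) :
    monomial β (w - t • EuclideanSpace.single i 1) =
      (w i - t) ^ β i * ∏ j ∈ Finset.univ.erase i, w j ^ β j := by
  rw [monomial, ← Finset.mul_prod_erase _ _ (Finset.mem_univ i)]
  congr 1
  · simp
  · refine Finset.prod_congr rfl fun j hj => ?_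
    simp [Finset.ne_of_mem_erase hj]

theorem sum_add_single (β : ι → ℕ) (i : ι) :
    ∑ j, (β + Pi.single i 1 : ι → ℕ) j = ∑ j, β j + 1 := by
  simp [Finset.sum_add_distrib]

theorem sum_add_single_lt {β : ι → ℕ} {a c : ℝ} (hc : (∑ j, β j : ℝ) + a < c) (i : ι) :
    (∑ j, (β + Pi.single i 1 : ι → ℕ) j : ℝ) + a < c + 2 := by
  rw [← Nat.cast_sum, sum_add_single]
  push_cast
  linarith

theorem sum_sub_single_lt {β : ι → ℕ} {a c : ℝ} (hc : (∑ j, β j : ℝ) + a < c) (i : ι) :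
    (∑ j, (β - Pi.single i 1 : ι → ℕ) j : ℝ) + a < c := by
  have : (∑ j, (β - Pi.single i 1 : ι → ℕ) j : ℝ) ≤ ∑ j, (β j : ℝ) := by
    exact_mod_cast Finset.sum_le_sum fun j _ => tsub_le_self
  linarith

theorem sum_monomialKernel_single_add_single {c : ℝ} (hc : c ≠ 0) (z : EuclideanSpace ℝ ι) :
    ∑ i, monomialKernel (Pi.single i 1 + Pi.single i 1) (c + 2) z = monomialKernel 0 c z := by
  have hsq (i : ι) : monomial (Pi.single i 1 + Pi.single i 1) z = z i ^ 2 := by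
    rw [monomial_add_single, ← zero_add (Pi.single i 1), monomial_add_single, monomial_zero]
    ring
  rcases eq_or_ne z 0 with rfl | hz
  · simp [monomialKernel, hsq, hc]
  · simp only [monomialKernel, hsq, monomial_zero, one_mul, ← Finset.sum_mul,
      ← EuclideanSpace.real_norm_sq_eq]
    rw [← Real.rpow_natCast, ← Real.rpow_add (norm_pos_iff.2 hz)]
    norm_num

-- `β - Pi.single i 1` is truncated where `β i = 0`, but there its coefficient `β i` vanishes.
theorem hasDerivAt_monomial_sub_smul_single (β : ι → ℕ) (i : ι) (w : EuclideanSpace ℝ ι)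
    (t : ℝ) :
    HasDerivAt (fun τ => monomial β (w - τ • EuclideanSpace.single i 1))
      (-(β i * monomial (β - Pi.single i 1) (w - t • EuclideanSpace.single i 1))) t := by
  simp only [monomial_sub_smul_single]
  have hrest : ∏ j ∈ Finset.univ.erase i, w j ^ (β - Pi.single i 1 : ι → ℕ) j =
      ∏ j ∈ Finset.univ.erase i, w j ^ β j :=
    Finset.prod_congr rfl fun j hj => by simp [Finset.ne_of_mem_erase hj]
  rw [hrest]
  refine ((((hasDerivAt_id t).const_sub (w i)).pow (β i)).mul_const _).congr_deriv ?_
  simp only [id_eq, mul_neg, mul_one, neg_mul, Pi.sub_apply, Pi.single_eq_same, neg_inj]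
  ring

theorem hasDerivAt_monomialKernel_sub_smul_single (β : ι → ℕ) (c : ℝ) (i : ι)
    {w : EuclideanSpace ℝ ι} {t : ℝ} (h : w - t • EuclideanSpace.single i 1 ≠ 0) :
    HasDerivAt (fun τ => monomialKernel β c (w - τ • EuclideanSpace.single i 1))
      (c * monomialKernel (β + Pi.single i 1) (c + 2) (w - t • EuclideanSpace.single i 1) -
        β i * monomialKernel (β - Pi.single i 1) c (w - t • EuclideanSpace.single i 1)) t := by
  have hline : HasDerivAt (fun τ : ℝ => w - τ • EuclideanSpace.single i (1 : ℝ))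
      (-EuclideanSpace.single i 1) t := by
    simpa using (((hasDerivAt_id t).smul_const (EuclideanSpace.single i (1 : ℝ))).const_sub w)
  refine ((hasDerivAt_monomial_sub_smul_single β i w t).mul (hline.norm_rpow h (-c))).congr_deriv ?_
  simp only [monomialKernel, monomial_add_single, inner_neg_right,
    EuclideanSpace.inner_single_right]
  rw [show -(c + 2) = -c - 2 by ring]
  simp only [PiLp.sub_apply, PiLp.smul_apply, PiLp.single_eq_same, smul_eq_mul, mul_one,
    Real.ringHom_apply]
  ring

end DecidableEq

section Moments

variable {φ : EuclideanSpace ℝ ι → ℝ} {ε C : ℝ}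

theorem continuous_mul_monomialKernel (hφ : Continuous φ)
    (hvan : ∀ y : EuclideanSpace ℝ ι, ‖y‖ ≤ ε → φ y = 0) {x : EuclideanSpace ℝ ι}
    (hx : ‖x‖ < ε) (β : ι → ℕ) (c : ℝ) :
    Continuous fun y => φ y * monomialKernel β c (y - x) :=
  continuous_mul_comp_sub_of_eventuallyEq_zero hφ
    (eventually_of_mem (Metric.isOpen_ball.mem_nhds (mem_ball_zero_iff.2 hx)) fun y hy =>
      hvan y (mem_ball_zero_iff.1 hy).le)
    (continuousOn_monomialKernel β c)

theorem norm_mul_monomialKernel_le (hC : ∀ y, ‖φ y‖ ≤ C)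
    (hvan : ∀ y : EuclideanSpace ℝ ι, ‖y‖ ≤ ε → φ y = 0) {r : ℝ} (hr : r < ε)
    {x : EuclideanSpace ℝ ι} (hx : ‖x‖ ≤ r) (β : ι → ℕ) {c : ℝ} (hc : 0 ≤ c)
    (y : EuclideanSpace ℝ ι) :
    ‖φ y * monomialKernel β c (y - x)‖ ≤
      C * (1 + r) ^ (∑ i, β i) * ((ε - r) / (1 + ε)) ^ (-c) *
        (1 + ‖y‖) ^ ((∑ i, β i : ℝ) - c) := by
  have hr0 : 0 ≤ r := (norm_nonneg x).trans hx
  have hκ : 0 < (ε - r) / (1 + ε) := div_pos (by linarith) (by linarith)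
  have hC0 : 0 ≤ C := (norm_nonneg _).trans (hC 0)
  rcases le_or_gt ‖y‖ ε with hy | hy
  · rw [hvan y hy, zero_mul, norm_zero]
    positivity
  have hlow := div_one_add_mul_one_add_norm_le_norm_sub hr hx hy.le
  have hup := norm_sub_le_one_add_mul_one_add_norm (y := y) hx
  calc ‖φ y * monomialKernel β c (y - x)‖
      ≤ C * (‖y - x‖ ^ (∑ i, β i) * ‖y - x‖ ^ (-c)) := by
        rw [norm_mul, Real.norm_eq_abs (monomialKernel _ _ _)]
        exact mul_le_mul (hC y) (abs_monomialKernel_le β c _) (abs_nonneg _) hC0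
    _ ≤ C * (((1 + r) * (1 + ‖y‖)) ^ (∑ i, β i) *
          ((ε - r) / (1 + ε) * (1 + ‖y‖)) ^ (-c)) := by
        refine mul_le_mul_of_nonneg_left (mul_le_mul (pow_le_pow_left₀ (norm_nonneg _) hup _)
          (Real.rpow_le_rpow_of_nonpos (by positivity) hlow (by linarith)) (by positivity)
          (by positivity)) hC0
    _ = _ := by
        rw [mul_pow, Real.mul_rpow hκ.le (by positivity),
          show (∑ i, β i : ℝ) - c = (∑ i, β i : ℕ) + -c by push_cast; ring,
          Real.rpow_add (by positivity), Real.rpow_natCast]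
        ring

theorem exists_integrable_bound_mul_monomialKernel (hC : ∀ y, ‖φ y‖ ≤ C)
    (hvan : ∀ y : EuclideanSpace ℝ ι, ‖y‖ ≤ ε → φ y = 0) {r : ℝ} (hr : r < ε)
    (β : ι → ℕ) {c : ℝ} (hc : (∑ i, β i : ℝ) + Fintype.card ι < c) :
    ∃ g : EuclideanSpace ℝ ι → ℝ, Integrable g ∧
      ∀ x, ‖x‖ ≤ r → ∀ y, ‖φ y * monomialKernel β c (y - x)‖ ≤ g y := by
  have hβ : (0 : ℝ) ≤ ∑ i, (β i : ℝ) := by positivity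
  refine ⟨_, ?_, fun x hx y => norm_mul_monomialKernel_le hC hvan hr hx β (by linarith) y⟩
  have := integrable_one_add_norm (E := EuclideanSpace ℝ ι) (μ := volume)
    (r := c - ∑ i, (β i : ℝ)) (by rw [finrank_euclideanSpace]; linarith)
  simpa only [neg_sub] using this.const_mul _

theorem integrable_mul_monomialKernel (hφ : Continuous φ) (hC : ∀ y, ‖φ y‖ ≤ C)
    (hvan : ∀ y : EuclideanSpace ℝ ι, ‖y‖ ≤ ε → φ y = 0) {x : EuclideanSpace ℝ ι}
    (hx : ‖x‖ < ε) (β : ι → ℕ) {c : ℝ} (hc : (∑ i, β i : ℝ) + Fintype.card ι < c) :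
    Integrable fun y => φ y * monomialKernel β c (y - x) := by
  obtain ⟨g, hg, hbound⟩ := exists_integrable_bound_mul_monomialKernel hC hvan hx β hc
  exact hg.mono' (continuous_mul_monomialKernel hφ hvan hx β c).aestronglyMeasurable
    (ae_of_all _ (hbound x le_rfl))

variable [DecidableEq ι]

theorem hasDerivAt_mul_monomialKernel_sub_add_smul_single
    (hvan : ∀ y : EuclideanSpace ℝ ι, ‖y‖ ≤ ε → φ y = 0) (β : ι → ℕ) (c : ℝ) (i : ι)
    {x y : EuclideanSpace ℝ ι} {t : ℝ} (hxt : ‖x + t • EuclideanSpace.single i 1‖ < ε) :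
    HasDerivAt (fun τ => φ y * monomialKernel β c (y - (x + τ • EuclideanSpace.single i 1)))
      (c * (φ y * monomialKernel (β + Pi.single i 1) (c + 2)
          (y - (x + t • EuclideanSpace.single i 1))) -
        β i * (φ y * monomialKernel (β - Pi.single i 1) c
          (y - (x + t • EuclideanSpace.single i 1)))) t := by
  rcases le_or_gt ‖y‖ ε with hy | hy
  · simpa [hvan y hy] using hasDerivAt_const t (0 : ℝ)
  have hne : y - x - t • EuclideanSpace.single i 1 ≠ 0 := by
    rw [sub_sub, sub_ne_zero]
    rintro rfl
    exact hxt.not_ge hy.le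
  simp only [← sub_sub]
  exact ((hasDerivAt_monomialKernel_sub_smul_single β c i hne).const_mul (φ y)).congr_deriv
    (by ring)

theorem exists_integrable_bound_deriv (hC : ∀ y, ‖φ y‖ ≤ C)
    (hvan : ∀ y : EuclideanSpace ℝ ι, ‖y‖ ≤ ε → φ y = 0) {r : ℝ} (hr : r < ε)
    (β : ι → ℕ) {c : ℝ} (hc : (∑ i, β i : ℝ) + Fintype.card ι < c) (i : ι) :
    ∃ g : EuclideanSpace ℝ ι → ℝ, Integrable g ∧ ∀ x, ‖x‖ ≤ r → ∀ y,
      ‖c * (φ y * monomialKernel (β + Pi.single i 1) (c + 2) (y - x)) -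
        β i * (φ y * monomialKernel (β - Pi.single i 1) c (y - x))‖ ≤ g y := by
  obtain ⟨g₁, hg₁, hbound₁⟩ :=
    exists_integrable_bound_mul_monomialKernel hC hvan hr _ (sum_add_single_lt hc i)
  obtain ⟨g₂, hg₂, hbound₂⟩ :=
    exists_integrable_bound_mul_monomialKernel hC hvan hr _ (sum_sub_single_lt hc i)
  have hc0 : 0 ≤ c := by
    have : (0 : ℝ) ≤ ∑ j, (β j : ℝ) := by positivity
    linarith
  refine ⟨fun y => c * g₁ y + β i * g₂ y, (hg₁.const_mul c).add (hg₂.const_mul _),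
    fun x hx y => ?_⟩
  calc _ ≤ c * ‖φ y * monomialKernel (β + Pi.single i 1) (c + 2) (y - x)‖ +
        β i * ‖φ y * monomialKernel (β - Pi.single i 1) c (y - x)‖ := by
        refine (norm_sub_le _ _).trans_eq ?_
        rw [norm_mul, norm_mul (β i : ℝ), Real.norm_of_nonneg hc0, Real.norm_natCast]
    _ ≤ c * g₁ y + β i * g₂ y := by
        gcongr
        exacts [hbound₁ x hx y, hbound₂ x hx y]

theorem hasDerivAt_rieszMoment_add_smul_single (hφ : Continuous φ) (hC : ∀ y, ‖φ y‖ ≤ C)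
    (hvan : ∀ y : EuclideanSpace ℝ ι, ‖y‖ ≤ ε → φ y = 0) {x : EuclideanSpace ℝ ι}
    (hx : ‖x‖ < ε) (β : ι → ℕ) {c : ℝ} (hc : (∑ i, β i : ℝ) + Fintype.card ι < c) (i : ι) :
    HasDerivAt (fun t : ℝ => rieszMoment φ β c (x + t • EuclideanSpace.single i 1))
      (c * rieszMoment φ (β + Pi.single i 1) (c + 2) x -
        β i * rieszMoment φ (β - Pi.single i 1) c x) 0 := by
  set e : EuclideanSpace ℝ ι := EuclideanSpace.single i 1
  obtain ⟨r, hxr, hrε⟩ := exists_between hx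
  obtain ⟨g, hg, hbound⟩ := exists_integrable_bound_deriv hC hvan hrε β hc i
  have hnear : ∀ᶠ t in 𝓝 (0 : ℝ), ‖x + t • e‖ < r := eventually_norm_add_smul_lt hxr e
  have key := hasDerivAt_integral_of_dominated_loc_of_deriv_le (μ := volume) (x₀ := 0)
    (F := fun t y => φ y * monomialKernel β c (y - (x + t • e)))
    (F' := fun t y => c * (φ y * monomialKernel (β + Pi.single i 1) (c + 2) (y - (x + t • e))) -
      β i * (φ y * monomialKernel (β - Pi.single i 1) c (y - (x + t • e))))
    hnear
    (hnear.mono fun t ht =>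
      (continuous_mul_monomialKernel hφ hvan (ht.trans hrε) β c).aestronglyMeasurable)
    (by simpa using integrable_mul_monomialKernel hφ hC hvan hx β hc)
    (by
      simp only [zero_smul, add_zero]
      exact (((continuous_mul_monomialKernel hφ hvan hx _ _).const_mul c).sub
        ((continuous_mul_monomialKernel hφ hvan hx _ _).const_mul _)).aestronglyMeasurable)
    (ae_of_all _ fun y t ht => hbound _ (le_of_lt ht) y) hg
    (ae_of_all _ fun y t ht =>
      hasDerivAt_mul_monomialKernel_sub_add_smul_single hvan β c i (ht.trans hrε))
  refine key.2.congr_deriv ?_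
  simp only [zero_smul, add_zero]
  rw [integral_sub
    ((integrable_mul_monomialKernel hφ hC hvan hx _ (sum_add_single_lt hc i)).const_mul c)
    ((integrable_mul_monomialKernel hφ hC hvan hx _ (sum_sub_single_lt hc i)).const_mul _),
    integral_const_mul, integral_const_mul]
  rfl

theorem rieszMoment_add_single_eq_zero (hφ : Continuous φ) (hC : ∀ y, ‖φ y‖ ≤ C)
    (hvan : ∀ y : EuclideanSpace ℝ ι, ‖y‖ ≤ ε → φ y = 0) (β : ι → ℕ) {c : ℝ}
    (hc : (∑ i, β i : ℝ) + Fintype.card ι < c) (i : ι)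
    (h : ∀ x : EuclideanSpace ℝ ι, ‖x‖ < ε → rieszMoment φ β c x = 0)
    (h' : ∀ x : EuclideanSpace ℝ ι, ‖x‖ < ε → rieszMoment φ (β - Pi.single i 1) c x = 0)
    {x : EuclideanSpace ℝ ι} (hx : ‖x‖ < ε) :
    rieszMoment φ (β + Pi.single i 1) (c + 2) x = 0 := by
  have hc0 : 0 < c := by
    have : (0 : ℝ) ≤ ∑ j, (β j : ℝ) := by positivity
    linarith [(Fintype.card ι).cast_nonneg (α := ℝ)]
  have := (hasDerivAt_rieszMoment_add_smul_single hφ hC hvan hx β hc i).unique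
    (hasDerivAt_zero_of_forall_norm_lt_eq_zero h hx _)
  rw [h' x hx, mul_zero, sub_zero] at this
  exact (mul_eq_zero.1 this).resolve_left hc0.ne'

theorem rieszMoment_zero_eq_zero (hφ : Continuous φ) (hC : ∀ y, ‖φ y‖ ≤ C)
    (hvan : ∀ y : EuclideanSpace ℝ ι, ‖y‖ ≤ ε → φ y = 0) {c : ℝ}
    (hc : (Fintype.card ι : ℝ) + 1 < c)
    (h : ∀ i, ∀ x : EuclideanSpace ℝ ι, ‖x‖ < ε → rieszMoment φ (Pi.single i 1) c x = 0)
    {x : EuclideanSpace ℝ ι} (hx : ‖x‖ < ε) :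
    rieszMoment φ 0 c x = 0 := by
  have hc0 : c ≠ 0 := by linarith [(Fintype.card ι).cast_nonneg (α := ℝ)]
  have hsingle (i : ι) : (∑ j, (Pi.single i 1 : ι → ℕ) j : ℝ) + Fintype.card ι < c := by
    rw [← Nat.cast_sum]
    simpa [add_comm] using hc
  have hrel (i : ι) :
      c * rieszMoment φ (Pi.single i 1 + Pi.single i 1) (c + 2) x = rieszMoment φ 0 c x := by
    have := (hasDerivAt_rieszMoment_add_smul_single hφ hC hvan hx _ (hsingle i) i).unique
      (hasDerivAt_zero_of_forall_norm_lt_eq_zero (h i) hx _)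
    simpa [sub_eq_zero] using this
  have hsum : ∑ i, rieszMoment φ (Pi.single i 1 + Pi.single i 1) (c + 2) x =
      rieszMoment φ 0 c x := by
    simp only [rieszMoment]
    rw [← integral_finsetSum _ fun i _ =>
      integrable_mul_monomialKernel hφ hC hvan hx _ (sum_add_single_lt (hsingle i) i)]
    simp only [← Finset.mul_sum, sum_monomialKernel_single_add_single hc0]
  have hcard : c * rieszMoment φ 0 c x = Fintype.card ι * rieszMoment φ 0 c x := by
    calc c * rieszMoment φ 0 c x
        = ∑ i, c * rieszMoment φ (Pi.single i 1 + Pi.single i 1) (c + 2) x := by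
          rw [← Finset.mul_sum, hsum]
      _ = Fintype.card ι * rieszMoment φ 0 c x := by simp [hrel]
  have hne : c - Fintype.card ι ≠ 0 := by linarith
  have := sub_eq_zero.2 hcard
  rw [← sub_mul] at this
  exact (mul_eq_zero.1 this).resolve_left hne

theorem rieszMoment_eq_zero_of_sum_le (hφ : Continuous φ) (hC : ∀ y, ‖φ y‖ ≤ C)
    (hvan : ∀ y : EuclideanSpace ℝ ι, ‖y‖ ≤ ε → φ y = 0) {c₀ : ℝ}
    (hc₀ : (Fintype.card ι : ℝ) < c₀)
    (h₀ : ∀ x : EuclideanSpace ℝ ι, ‖x‖ < ε → rieszMoment φ 0 c₀ x = 0) (k : ℕ) :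
    ∀ β : ι → ℕ, ∑ i, β i ≤ k → ∀ x : EuclideanSpace ℝ ι, ‖x‖ < ε →
      rieszMoment φ β (c₀ + 2 * k) x = 0 := by
  induction k with
  | zero =>
    intro β hβ
    obtain rfl : β = 0 :=
      funext fun i => Finset.sum_eq_zero_iff.1 (Nat.le_zero.1 hβ) i (Finset.mem_univ i)
    simpa using h₀
  | succ k ih =>
    have hstep (β : ι → ℕ) (i : ι) (hβ : ∑ j, β j ≤ k) (x : EuclideanSpace ℝ ι)
        (hx : ‖x‖ < ε) : rieszMoment φ (β + Pi.single i 1) (c₀ + 2 * k + 2) x = 0 := by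
      have hβ' : (∑ j, (β j : ℝ)) ≤ k := by exact_mod_cast hβ
      exact rieszMoment_add_single_eq_zero hφ hC hvan β (by linarith) i (ih β hβ)
        (ih _ ((Finset.sum_le_sum fun j _ => tsub_le_self).trans hβ)) hx
    intro γ hγ x hx
    rw [show c₀ + 2 * ((k + 1 : ℕ) : ℝ) = c₀ + 2 * k + 2 by push_cast; ring]
    rcases eq_or_ne γ 0 with rfl | hγ
    · refine rieszMoment_zero_eq_zero hφ hC hvan (by linarith) (fun i y hy => ?_) hx
      simpa using hstep 0 i (by simp) y hy
    · obtain ⟨i, hi⟩ := Function.ne_iff.1 hγ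
      rw [← sub_single_add_single hi]
      refine hstep _ i ?_ x hx
      have := sum_add_single (γ - Pi.single i 1) i
      rw [sub_single_add_single hi] at this
      omega

end Moments

end FractionalUCP

open FractionalUCP in
theorem fractional_laplacian_ucp_inductive_step_general
    (n : ℕ) (s : ℝ) (hs : s ∈ Set.Ioo (0 : ℝ) 1)
    (ε : ℝ) (hε : 0 < ε)
    (φ : EuclideanSpace ℝ (Fin n) → ℝ)
    (hcont : Continuous φ)
    (hinf : Tendsto φ (cocompact (EuclideanSpace ℝ (Fin n))) (nhds 0))
    (hvan : ∀ y : EuclideanSpace ℝ (Fin n), ‖y‖ ≤ ε → φ y = 0)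
    (hker : ∀ x : EuclideanSpace ℝ (Fin n), ‖x‖ < ε →
      ∫ y : EuclideanSpace ℝ (Fin n), φ y * ‖y - x‖ ^ (-((n : ℝ) + 2 * s)) = 0) :
    ∀ (m : ℕ) (β : Fin n → ℕ), (∑ i, β i) ≤ m →
      ∫ y : EuclideanSpace ℝ (Fin n),
        φ y * (∏ i, (y i) ^ (β i)) * ‖y‖ ^ (-(2 * (m : ℝ) + n + 2 * s)) = 0 := by
  intro m β hβ
  obtain ⟨C, hC⟩ := isBounded_iff_forall_norm_le.1
    (ZeroAtInftyContinuousMap.isBounded_range ⟨⟨φ, hcont⟩, hinf⟩)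
  have h₀ (x : EuclideanSpace ℝ (Fin n)) (hx : ‖x‖ < ε) : rieszMoment φ 0 (n + 2 * s) x = 0 := by
    simpa [rieszMoment, monomialKernel] using hker x hx
  have hmoment := rieszMoment_eq_zero_of_sum_le hcont (fun y => hC _ ⟨y, rfl⟩) hvan
    (by simpa using hs.1) h₀ m β hβ 0 (by simpa using hε)
  rw [show -(2 * (m : ℝ) + n + 2 * s) = -(n + 2 * s + 2 * m) by ring]
  simpa [rieszMoment, monomialKernel, monomial, mul_assoc] using hmoment

/-- If a continuous function `φ` vanishing at infinity vanishes on the closed ball of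
radius `ε` and annihilates all translated Riesz kernels `y ↦ |y - x|^{-(n+2s)}`, `|x| < ε`,
then it also annihilates all the functions `y ↦ y^β · |y|^{-(2m+n+2s)}` with `|β| ≤ m`.
This is the inductive step in the proof of unique continuation for `(-Δ)^s`, `n > 1`. -/
theorem fractional_laplacian_ucp_inductive_step
    (n : ℕ) (hn : 1 ≤ n) (s : ℝ) (hs : s ∈ Set.Ioo (0 : ℝ) 1)
    (ε : ℝ) (hε : 0 < ε)
    (φ : EuclideanSpace ℝ (Fin n) → ℝ)
    (hcont : Continuous φ)
    (hinf : Tendsto φ (cocompact (EuclideanSpace ℝ (Fin n))) (nhds 0))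
    (hvan : ∀ y : EuclideanSpace ℝ (Fin n), ‖y‖ ≤ ε → φ y = 0)
    (hker : ∀ x : EuclideanSpace ℝ (Fin n), ‖x‖ < ε →
      ∫ y : EuclideanSpace ℝ (Fin n), φ y * ‖y - x‖ ^ (-((n : ℝ) + 2 * s)) = 0) :
    ∀ (m : ℕ) (β : Fin n → ℕ), (∑ i, β i) ≤ m →
      ∫ y : EuclideanSpace ℝ (Fin n),
        φ y * (∏ i, (y i) ^ (β i)) * ‖y‖ ^ (-(2 * (m : ℝ) + n + 2 * s)) = 0 :=
  fractional_laplacian_ucp_inductive_step_general n s hs ε hε φ hcont hinf hvan hker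
end

section
/- Let ε > 0 and let K = {y ∈ ℝ : |y| ≥ ε}. For every continuous function f : K → ℝ vanishing at infinity and every δ > 0, there exist N ∈ ℕ and real coefficients c₁, …, c_N such that sup_{y ∈ K} | f(y) − Σ_{k=1}^N c_k · sgn(y)^k · |y|^{-k} | < δ. In other words, the linear span of the functions y ↦ sgn(y)^k·|y|^{-k}, k ≥ 1, is dense in the uniform norm in the space of continuous functions on {|y| ≥ ε} vanishing at infinity. -/
/-!
Under `x = y⁻¹` the functions `sgn(y)^k · |y|^{-k}` become the monomials `x^k`, and `K` becomes
the punctured interval `[-ε⁻¹, ε⁻¹] \ {0}`. Since `f` vanishes at infinity, `x ↦ f x⁻¹` extends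
continuously by `0` at `x = 0`, so the Weierstrass theorem approximates it on `[-ε⁻¹, ε⁻¹]` by
polynomials; as the extension vanishes at `0`, the constant term of such a polynomial is small
and can be dropped.
-/

open Filter Topology Function Set Bornology Polynomial

lemma tendsto_cocompact_inf_principal_of_isCompact_norm_ge {X E : Type*} [TopologicalSpace X]
    [SeminormedAddGroup E] {s : Set X} {f : X → E}
    (hf : ∀ δ : ℝ, 0 < δ → IsCompact {x | x ∈ s ∧ δ ≤ ‖f x‖}) :
    Tendsto f (cocompact X ⊓ 𝓟 s) (𝓝 0) := by
  rw [NormedAddGroup.tendsto_nhds_zero]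
  intro δ hδ
  filter_upwards [mem_inf_of_left (hf δ hδ).compl_mem_cocompact,
    mem_inf_of_right (mem_principal_self s)] with x hxδ hxs
  simpa [hxs] using hxδ

lemma continuousOn_update_comp_inv {𝕜 E : Type*} [NormedField 𝕜] [DecidableEq 𝕜]
    [TopologicalSpace E] {s t : Set 𝕜} {f : 𝕜 → E} {a : E} (hf : ContinuousOn f t)
    (hf_lim : Tendsto f (cobounded 𝕜 ⊓ 𝓟 t) (𝓝 a)) (hst : MapsTo (·⁻¹) (s \ {0}) t) :
    ContinuousOn (update (fun x ↦ f x⁻¹) 0 a) s := by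
  intro x hx
  rcases eq_or_ne x 0 with rfl | hx0
  · rw [continuousWithinAt_update_same]
    refine hf_lim.comp (tendsto_inf.2 ⟨?_, tendsto_principal.2 ?_⟩)
    · exact tendsto_inv₀_nhdsNE_zero.mono_left (nhdsWithin_mono _ fun _ h ↦ h.2)
    · exact eventually_nhdsWithin_of_forall hst
  · rw [continuousWithinAt_update_of_ne hx0, ← continuousWithinAt_sdiff_singleton (y := 0)]
    exact (hf _ (hst ⟨hx, hx0⟩)).comp (continuousAt_inv₀ hx0).continuousWithinAt hst

lemma Polynomial.eval_eq_coeff_zero_add_sum_Icc {R : Type*} [Semiring R] (p : R[X]) (x : R) :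
    p.eval x = p.coeff 0 + ∑ k ∈ Finset.Icc 1 p.natDegree, p.coeff k * x ^ k := by
  rw [eval_eq_sum_range, Finset.range_eq_Ico,
    Finset.sum_eq_sum_Ico_succ_bot p.natDegree.add_one_pos, zero_add,
    Finset.Ico_add_one_right_eq_Icc, pow_zero, mul_one]

lemma exists_sum_Icc_pow_near_of_continuousOn {a b δ : ℝ} {g : ℝ → ℝ}
    (hg : ContinuousOn g (Icc a b)) (h0 : (0 : ℝ) ∈ Icc a b) (hg0 : g 0 = 0) (hδ : 0 < δ) :
    ∃ (N : ℕ) (c : ℕ → ℝ), ∀ x ∈ Icc a b, |g x - ∑ k ∈ Finset.Icc 1 N, c k * x ^ k| < δ := by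
  obtain ⟨p, hp⟩ := exists_polynomial_near_of_continuousOn a b g hg (δ / 2) (half_pos hδ)
  have hp0 : |p.coeff 0| < δ / 2 := by simpa [hg0, coeff_zero_eq_eval_zero] using hp 0 h0
  refine ⟨p.natDegree, p.coeff, fun x hx ↦ ?_⟩
  have hpx := abs_lt.1 (hp x hx)
  rw [p.eval_eq_coeff_zero_add_sum_Icc] at hpx
  obtain ⟨hc₁, hc₂⟩ := abs_lt.1 hp0
  exact abs_lt.2 ⟨by linarith, by linarith⟩

lemma Real.sign_pow_mul_abs_zpow_neg (y : ℝ) (k : ℕ) :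
    Real.sign y ^ k * |y| ^ (-(k : ℤ)) = y⁻¹ ^ k := by
  rw [zpow_neg, zpow_natCast, ← inv_pow, ← mul_pow]
  rcases lt_trichotomy y 0 with hy | rfl | hy
  · rw [Real.sign_of_neg hy, abs_of_neg hy, neg_one_mul, inv_neg, neg_neg]
  · simp
  · rw [Real.sign_of_pos hy, abs_of_pos hy, one_mul]

/-- The linear span of the functions `y ↦ sgn(y)^k · |y|^{-k}`, `k ≥ 1`, is uniformly dense
in the space of continuous functions on `K = {|y| ≥ ε}` vanishing at infinity. -/
theorem span_sign_inv_powers_dense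
    (ε : ℝ) (hε : 0 < ε)
    (f : ℝ → ℝ)
    (hcont : ContinuousOn f {y : ℝ | ε ≤ |y|})
    (hinf : ∀ δ : ℝ, 0 < δ → IsCompact {y : ℝ | ε ≤ |y| ∧ δ ≤ |f y|})
    (δ : ℝ) (hδ : 0 < δ) :
    ∃ (N : ℕ) (c : ℕ → ℝ), ∀ y : ℝ, ε ≤ |y| →
      |f y - ∑ k ∈ Finset.Icc 1 N, c k * (Real.sign y) ^ k * |y| ^ (-(k : ℤ))| < δ := by
  have hmaps : MapsTo (·⁻¹) (Icc (-ε⁻¹) ε⁻¹ \ {0}) {y : ℝ | ε ≤ |y|} := fun x hx ↦ by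
    simpa [abs_inv] using (le_inv_comm₀ hε (abs_pos.2 hx.2)).2 (abs_le.2 hx.1)
  have hf_lim : Tendsto f (cobounded ℝ ⊓ 𝓟 {y : ℝ | ε ≤ |y|}) (𝓝 0) :=
    (tendsto_cocompact_inf_principal_of_isCompact_norm_ge hinf).mono_left
      (inf_le_inf_right _ Metric.cobounded_le_cocompact)
  have h0 : (0 : ℝ) ∈ Icc (-ε⁻¹) ε⁻¹ := abs_le.1 (by simpa using hε.le)
  obtain ⟨N, c, hc⟩ := exists_sum_Icc_pow_near_of_continuousOn
    (continuousOn_update_comp_inv hcont hf_lim hmaps) h0 (update_self _ _ _) hδ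
  refine ⟨N, c, fun y hy ↦ ?_⟩
  have hy0 : y ≠ 0 := by rintro rfl; simp at hy; linarith
  have hyI : y⁻¹ ∈ Icc (-ε⁻¹) ε⁻¹ := abs_le.1 (by rw [abs_inv]; exact inv_anti₀ hε hy)
  simp only [mul_assoc, Real.sign_pow_mul_abs_zpow_neg]
  simpa only [update_of_ne (inv_ne_zero hy0), inv_inv] using hc _ hyI
end

section
/- Let ν be a Lévy measure on ℝⁿ, and suppose there exist x₀ ∈ ℝⁿ and δ > 0 with |x₀| ≥ δ such that ν(B_δ(x₀)) = 0. Then there exists a smooth compactly supported function φ : ℝⁿ → ℝ with φ ≠ 0, supp φ ⊆ B_{δ/2}(x₀) (in particular φ = 0 on B_{δ/2}(0)), such that ∫_{ℝⁿ} φ(x+y) ν(dy) = 0 for every x with |x| < δ/2. Consequently, the Lévy operator with Lévy measure ν fails the unique continuation principle on the ball B_{δ/2}(0). -/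
/-!
Any smooth bump `φ` supported in `B_{δ/2}(x₀)` works: `B_{δ/2}(x₀)` misses `B_{δ/2}(0)` because
`|x₀| ≥ δ`, and for `|x| < δ/2` the translate `φ (x + ·)` is supported in `B_δ(x₀)`, which `ν`
does not charge.
-/

open MeasureTheory Metric Function

theorem integral_comp_add_eq_zero_of_support_subset_ball {E F : Type*} [SeminormedAddCommGroup E]
    [MeasurableSpace E] [NormedAddCommGroup F] [NormedSpace ℝ F] {ν : Measure E} {φ : E → F}
    {c x : E} {r R : ℝ} (hφ : support φ ⊆ ball c r) (hR : r + ‖x‖ ≤ R) (hν : ν (ball c R) = 0) :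
    ∫ y, φ (x + y) ∂ν = 0 := by
  have hshift : support (fun y ↦ φ (x + y)) ⊆ ball (c - x) r := fun y hy ↦ by
    have hxy : x + y ∈ ball c r := hφ hy
    rw [mem_ball, dist_eq_norm] at hxy ⊢
    convert hxy using 2
    abel
  have hball : ball (c - x) r ⊆ ball c R :=
    ball_subset_ball' (by rwa [dist_eq_norm, sub_sub_cancel_left, norm_neg])
  exact integral_eq_zero_of_ae (measure_mono_null (hshift.trans hball) hν)

theorem levy_hole_ucp_fails_general
    (n : ℕ) (ν : Measure (EuclideanSpace ℝ (Fin n)))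
    (x₀ : EuclideanSpace ℝ (Fin n)) (δ : ℝ) (hδ : 0 < δ) (hx₀ : δ ≤ ‖x₀‖)
    (hhole : ν (ball x₀ δ) = 0) :
    ∃ φ : EuclideanSpace ℝ (Fin n) → ℝ,
      ContDiff ℝ (⊤ : ℕ∞) φ ∧ HasCompactSupport φ ∧ φ ≠ 0 ∧
      tsupport φ ⊆ ball x₀ (δ / 2) ∧
      (∀ z ∈ ball (0 : EuclideanSpace ℝ (Fin n)) (δ / 2), φ z = 0) ∧
      ∀ x : EuclideanSpace ℝ (Fin n), ‖x‖ < δ / 2 → ∫ y, φ (x + y) ∂ν = 0 := by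
  obtain ⟨φ, hφ_tsupp, hφ_compact, hφ_smooth, -, hφ_x₀⟩ :=
    exists_contDiff_tsupport_subset (n := ⊤) (ball_mem_nhds x₀ (half_pos hδ))
  have hφ_supp : support φ ⊆ ball x₀ (δ / 2) := (subset_tsupport φ).trans hφ_tsupp
  have hdisj : Disjoint (ball x₀ (δ / 2)) (ball 0 (δ / 2)) :=
    ball_disjoint_ball (by rw [dist_zero_right]; linarith)
  refine ⟨φ, hφ_smooth, hφ_compact, fun h ↦ by simp [h] at hφ_x₀, hφ_tsupp,
    fun z hz ↦ notMem_support.1 fun hφz ↦ hdisj.ne_of_mem (hφ_supp hφz) hz rfl,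
    fun x hx ↦ integral_comp_add_eq_zero_of_support_subset_ball hφ_supp (by linarith) hhole⟩

/-- If the Lévy measure `ν` has a "hole" `B_δ(x₀)` in its support (with `|x₀| ≥ δ`), then
there is a nonzero smooth compactly supported `φ` with support in `B_{δ/2}(x₀)` (in particular
`φ = 0` on `B_{δ/2}(0)`) such that `∫ φ(x+y) ν(dy) = 0` for all `|x| < δ/2`: the Lévy operator
with Lévy measure `ν` fails the unique continuation principle on `B_{δ/2}(0)`. -/
theorem levy_hole_ucp_fails
    (n : ℕ) (ν : Measure (EuclideanSpace ℝ (Fin n)))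
    (hν0 : ν {0} = 0)
    (hνint : ∫⁻ y : EuclideanSpace ℝ (Fin n), ENNReal.ofReal (min 1 (‖y‖ ^ 2)) ∂ν < ⊤)
    (x₀ : EuclideanSpace ℝ (Fin n)) (δ : ℝ) (hδ : 0 < δ) (hx₀ : δ ≤ ‖x₀‖)
    (hhole : ν (ball x₀ δ) = 0) :
    ∃ φ : EuclideanSpace ℝ (Fin n) → ℝ,
      ContDiff ℝ (⊤ : ℕ∞) φ ∧ HasCompactSupport φ ∧ φ ≠ 0 ∧
      tsupport φ ⊆ ball x₀ (δ / 2) ∧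
      (∀ z ∈ ball (0 : EuclideanSpace ℝ (Fin n)) (δ / 2), φ z = 0) ∧
      ∀ x : EuclideanSpace ℝ (Fin n), ‖x‖ < δ / 2 → ∫ y, φ (x + y) ∂ν = 0 :=
  levy_hole_ucp_fails_general n ν x₀ δ hδ hx₀ hhole
end

section
/- Let ν be a Lévy measure on ℝⁿ, and suppose there exist x₀ ∈ ℝⁿ and δ > 0 with |x₀| ≥ δ such that the restriction of ν to B_δ(x₀) equals the restriction of Lebesgue measure to B_δ(x₀). Then there exists a smooth compactly supported function φ : ℝⁿ → ℝ with φ ≠ 0, supp φ ⊆ B_{δ/2}(x₀) (in particular φ = 0 on B_{δ/2}(0)), such that ∫_{ℝⁿ} φ(x+y) ν(dy) = 0 for every x with |x| < δ/2. Hence full topological support of the Lévy measure is not sufficient for the unique continuation principle: the Lévy operator with Lévy measure ν fails the UCP. -/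
open MeasureTheory Metric

/-!
Lebesgue measure cannot tell a bump from its translate, so the difference `φ` of a bump at `x₀`
and a translate of it has integral zero. If `φ` is supported in `B_{δ/2}(x₀)`, every translate
`φ(x + ·)` with `|x| < δ/2` lives in `B_δ(x₀)`, where `ν` is Lebesgue measure; hence
`∫ φ(x + y) ν(dy) = ∫ φ = 0`, while `φ` vanishes on `B_{δ/2}(0)` because `|x₀| ≥ δ`.
-/

theorem integral_eq_of_restrict_eq_of_forall_notMem_eq_zero {α E : Type*} [MeasurableSpace α]
    [NormedAddCommGroup E] [NormedSpace ℝ E] {μ ν : Measure α} {s : Set α} {f : α → E}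
    (hμν : μ.restrict s = ν.restrict s) (hf : ∀ x ∉ s, f x = 0) :
    ∫ x, f x ∂μ = ∫ x, f x ∂ν := by
  rw [← setIntegral_eq_integral_of_forall_compl_eq_zero hf, hμν,
    setIntegral_eq_integral_of_forall_compl_eq_zero hf]

theorem apply_add_eq_zero_of_tsupport_subset_ball {E F : Type*} [SeminormedAddCommGroup E]
    [Zero F] {φ : E → F} {x₀ x : E} {r s : ℝ} (hφ : tsupport φ ⊆ ball x₀ r)
    (hx : ‖x‖ < s) :
    ∀ y ∉ ball x₀ (r + s), φ (x + y) = 0 := by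
  intro y hy
  refine image_eq_zero_of_notMem_tsupport fun hxy => hy ?_
  have hxy : dist (x + y) x₀ < r := hφ hxy
  rw [mem_ball]
  calc dist y x₀ ≤ dist y (x + y) + dist (x + y) x₀ := dist_triangle _ _ _
    _ = ‖x‖ + dist (x + y) x₀ := by rw [dist_comm, dist_add_self_left]
    _ < r + s := by linarith

theorem exists_contDiff_tsupport_subset_ball_integral_eq_zero {E : Type*} [NormedAddCommGroup E]
    [NormedSpace ℝ E] [FiniteDimensional ℝ E] [Nontrivial E] [MeasurableSpace E] [BorelSpace E]
    (μ : Measure E) [μ.IsAddHaarMeasure] (x₀ : E) {r : ℝ} (hr : 0 < r) :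
    ∃ φ : E → ℝ, ContDiff ℝ (⊤ : ℕ∞) φ ∧ HasCompactSupport φ ∧ φ ≠ 0 ∧
      tsupport φ ⊆ ball x₀ r ∧ ∫ y, φ y ∂μ = 0 := by
  obtain ⟨v, hv⟩ := exists_norm_eq E (half_pos hr).le
  let B : ContDiffBump x₀ := ⟨r / 8, r / 4, by positivity, by linarith⟩
  let φ : E → ℝ := fun y => B y - B (y - v)
  have hsupp : tsupport φ ⊆ closedBall x₀ (3 * r / 4) := by
    refine (tsupport_sub _ _).trans (Set.union_subset ?_ fun y hy => ?_)
    · rw [B.tsupport_eq]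
      exact closedBall_subset_closedBall (show r / 4 ≤ 3 * r / 4 by linarith)
    · have hyv : dist (y - v) x₀ ≤ r / 4 := by
        simpa [B.tsupport_eq] using tsupport_comp_subset_preimage B (continuous_sub_right v) hy
      rw [mem_closedBall]
      calc dist y x₀ ≤ dist y (y - v) + dist (y - v) x₀ := dist_triangle _ _ _
        _ ≤ r / 2 + r / 4 := by rw [dist_self_sub_right, hv]; linarith
        _ = 3 * r / 4 := by ring
  refine ⟨φ, ?_, ?_, fun hφ => ?_, hsupp.trans (closedBall_subset_ball (by linarith)), ?_⟩
  · exact B.contDiff.sub (B.contDiff.comp (contDiff_id.sub contDiff_const))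
  · exact (isCompact_closedBall x₀ _).of_isClosed_subset (isClosed_tsupport φ) hsupp
  · have hB₀ : B x₀ = 1 :=
      B.one_of_mem_closedBall (mem_closedBall_self (show 0 ≤ r / 8 by positivity))
    have hBv : B (x₀ - v) = 0 :=
      B.zero_of_le_dist (by rw [dist_self_sub_left, hv]; show r / 4 ≤ r / 2; linarith)
    simpa [φ, hB₀, hBv] using congr_fun hφ x₀
  · have hB : Integrable B μ := B.continuous.integrable_of_hasCompactSupport B.hasCompactSupport
    rw [integral_sub hB (hB.comp_sub_right v), integral_sub_right_eq_self (fun y => B y) v,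
      sub_self]

theorem levy_lebesgue_patch_ucp_fails_general
    (n : ℕ) (ν : Measure (EuclideanSpace ℝ (Fin n)))
    (x₀ : EuclideanSpace ℝ (Fin n)) (δ : ℝ) (hδ : 0 < δ) (hx₀ : δ ≤ ‖x₀‖)
    (hleb : ν.restrict (ball x₀ δ) = volume.restrict (ball x₀ δ)) :
    ∃ φ : EuclideanSpace ℝ (Fin n) → ℝ,
      ContDiff ℝ (⊤ : ℕ∞) φ ∧ HasCompactSupport φ ∧ φ ≠ 0 ∧
      tsupport φ ⊆ ball x₀ (δ / 2) ∧
      (∀ z ∈ ball (0 : EuclideanSpace ℝ (Fin n)) (δ / 2), φ z = 0) ∧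
      ∀ x : EuclideanSpace ℝ (Fin n), ‖x‖ < δ / 2 → ∫ y, φ (x + y) ∂ν = 0 := by
  have : Nontrivial (EuclideanSpace ℝ (Fin n)) :=
    nontrivial_of_ne x₀ 0 (norm_pos_iff.mp (hδ.trans_le hx₀))
  obtain ⟨φ, hφ, hφc, hφ0, hφs, hφi⟩ :=
    exists_contDiff_tsupport_subset_ball_integral_eq_zero volume x₀ (half_pos hδ)
  have hballs : Disjoint (ball (0 : EuclideanSpace ℝ (Fin n)) (δ / 2)) (ball x₀ (δ / 2)) :=
    ball_disjoint_ball (by rw [add_halves, dist_zero_left]; exact hx₀)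
  refine ⟨φ, hφ, hφc, hφ0, hφs, fun z hz => ?_, fun x hx => ?_⟩
  · exact image_eq_zero_of_notMem_tsupport fun h => Set.disjoint_left.mp hballs hz (hφs h)
  · have hvanish := apply_add_eq_zero_of_tsupport_subset_ball hφs hx
    rw [add_halves] at hvanish
    calc ∫ y, φ (x + y) ∂ν = ∫ y, φ (x + y) :=
          integral_eq_of_restrict_eq_of_forall_notMem_eq_zero hleb hvanish
      _ = ∫ y, φ y := integral_add_left_eq_self φ x
      _ = 0 := hφi

/-- If the Lévy measure `ν` coincides with Lebesgue measure on some ball `B_δ(x₀)` with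
`|x₀| ≥ δ`, then there is a nonzero smooth compactly supported `φ` with support in
`B_{δ/2}(x₀)` (in particular `φ = 0` on `B_{δ/2}(0)`) such that `∫ φ(x+y) ν(dy) = 0` for all
`|x| < δ/2`: full topological support of `ν` is not sufficient for the UCP. -/
theorem levy_lebesgue_patch_ucp_fails
    (n : ℕ) (ν : Measure (EuclideanSpace ℝ (Fin n)))
    (hν0 : ν {0} = 0)
    (hνint : ∫⁻ y : EuclideanSpace ℝ (Fin n), ENNReal.ofReal (min 1 (‖y‖ ^ 2)) ∂ν < ⊤)
    (x₀ : EuclideanSpace ℝ (Fin n)) (δ : ℝ) (hδ : 0 < δ) (hx₀ : δ ≤ ‖x₀‖)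
    (hleb : ν.restrict (ball x₀ δ) = volume.restrict (ball x₀ δ)) :
    ∃ φ : EuclideanSpace ℝ (Fin n) → ℝ,
      ContDiff ℝ (⊤ : ℕ∞) φ ∧ HasCompactSupport φ ∧ φ ≠ 0 ∧
      tsupport φ ⊆ ball x₀ (δ / 2) ∧
      (∀ z ∈ ball (0 : EuclideanSpace ℝ (Fin n)) (δ / 2), φ z = 0) ∧
      ∀ x : EuclideanSpace ℝ (Fin n), ‖x‖ < δ / 2 → ∫ y, φ (x + y) ∂ν = 0 :=
  levy_lebesgue_patch_ucp_fails_general n ν x₀ δ hδ hx₀ hleb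
end

section
/- Let β ≥ 0 and let ρ be a measure on (0,∞) with ∫_{(0,∞)} min(t,1) ρ(dt) < ∞. Define the Bernstein function f : (0,∞) → [0,∞) by f(λ) = βλ + ∫_{(0,∞)} (1 − e^{−λt}) ρ(dt), and let α > 0. Then the following are equivalent: (b) ∫_{(1,∞)} e^{αt} ρ(dt) < ∞; (c) there exists a function g : (−α,∞) → ℝ that is infinitely differentiable on (−α,∞), agrees with f on (0,∞), satisfies (−1)^{k+1} g^{(k)}(x) ≥ 0 for every k ≥ 1 and every x ∈ (−α,∞), and has a finite limit as x → −α⁺ (i.e. g extends continuously to [−α,∞)). -/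
/-!
If `∫_{t>1} e^{αt} ρ(dt) < ∞`, the integral defining `f` converges for `x > -α`, and
differentiating under the integral sign gives
`g⁽ᵏ⁾(x) = β [k = 1] + (-1)^{k+1} ∫ tᵏ e^{-xt} ρ(dt)`, which has the required signs; dominated
convergence gives the limit at `-α`.

Conversely, the sign conditions make the Lagrange remainder of the Taylor expansion of `g` at `1`
nonpositive on `(-α, 1)`, so that `∑ₖ (1 - x)ᵏ / k! ∫ tᵏ e^{-t} ρ(dt) ≤ g 1 - g x` there (the
derivatives of `g` at `1` are those of `f`). Letting `x → -α` and summing the exponential series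
under the integral bounds `∫ (e^{αt} - e^{-t}) ρ(dt)` by `g 1 - lim_{-α} g`.
-/

open MeasureTheory Set Filter Topology Real
open scoped Nat ContDiff

lemma contDiffOn_succ_of_hasDerivAt {𝕜 F : Type*} [NontriviallyNormedField 𝕜]
    [NormedAddCommGroup F] [NormedSpace 𝕜 F] {f f' : 𝕜 → F} {s : Set 𝕜} (hs : IsOpen s)
    (hf : ∀ x ∈ s, HasDerivAt f (f' x) x) {n : ℕ} (hf' : ContDiffOn 𝕜 n f' s) :
    ContDiffOn 𝕜 (n + 1) f s := by
  rw [contDiffOn_succ_iff_deriv_of_isOpen hs]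
  exact ⟨fun x hx => (hf x hx).differentiableAt.differentiableWithinAt, by simp,
    hf'.congr fun x hx => (hf x hx).deriv⟩

theorem taylor_sum_le_sub_of_iteratedDeriv_alternating {g : ℝ → ℝ} {U : Set ℝ} (hU : IsOpen U)
    {n : ℕ} (hg : ContDiffOn ℝ (n + 1) g U) {x x₀ : ℝ} (hx : x < x₀) (hxU : Icc x x₀ ⊆ U)
    (hsign : ∀ y ∈ Ioo x x₀, 0 ≤ (-1) ^ n * iteratedDeriv (n + 1) g y) :
    ∑ k ∈ Finset.range n, (-1) ^ k * iteratedDeriv (k + 1) g x₀ * (x₀ - x) ^ (k + 1) / (k + 1)!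
      ≤ g x₀ - g x := by
  have hI : uIcc x₀ x = Icc x x₀ := uIcc_of_ge hx.le
  obtain ⟨ξ, hξ, hT⟩ :=
    taylor_mean_remainder_lagrange_iteratedDeriv hx.ne' (hg.mono (hI ▸ hxU))
  rw [uIoo_of_ge hx.le] at hξ
  have hcoeff (k : ℕ) (hk : k ≤ n + 1) :
      iteratedDerivWithin k g (uIcc x₀ x) x₀ = iteratedDeriv k g x₀ :=
    iteratedDerivWithin_eq_iteratedDeriv (uniqueDiffOn_uIcc hx.ne')
      ((hg.contDiffAt (hU.mem_nhds (hxU (right_mem_Icc.2 hx.le)))).of_le (by exact_mod_cast hk))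
      left_mem_uIcc
  have hflip (m : ℕ) : (x - x₀) ^ m = (-1) ^ m * (x₀ - x) ^ m := by
    rw [← neg_sub x₀ x, neg_pow]
  have hrem : iteratedDeriv (n + 1) g ξ * (x - x₀) ^ (n + 1) / (n + 1)! ≤ 0 := by
    have hpos : 0 ≤ (x₀ - x) ^ (n + 1) / (n + 1)! := by have := hx.le; positivity
    calc _ = -((-1) ^ n * iteratedDeriv (n + 1) g ξ * ((x₀ - x) ^ (n + 1) / (n + 1)!)) := by
          rw [hflip]; ring
      _ ≤ 0 := neg_nonpos.2 (mul_nonneg (hsign ξ hξ) hpos)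
  have hterm : ∀ k ∈ Finset.range n,
      (((k + 1)! : ℝ)⁻¹ * (x - x₀) ^ (k + 1)) • iteratedDerivWithin (k + 1) g (uIcc x₀ x) x₀ =
        -((-1) ^ k * iteratedDeriv (k + 1) g x₀ * (x₀ - x) ^ (k + 1) / (k + 1)!) := by
    intro k hk
    rw [hcoeff (k + 1) (by simp at hk; omega), hflip, smul_eq_mul]
    ring
  rw [taylor_within_apply, Finset.sum_range_succ', Finset.sum_congr rfl hterm,
    Finset.sum_neg_distrib, hcoeff 0 (by omega)] at hT
  simp only [Nat.factorial_zero, Nat.cast_one, inv_one, pow_zero, mul_one, iteratedDeriv_zero,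
    one_smul] at hT
  linarith

namespace Real

lemma abs_exp_sub_one_le_abs_mul_exp {u b : ℝ} (hub : u ≤ b) (hb : 0 ≤ b) :
    |exp u - 1| ≤ |u| * exp b := by
  rcases le_total 0 u with hu | hu
  · have h : exp u * (1 - u) ≤ 1 := by
      have := mul_le_mul_of_nonneg_left (by linarith [add_one_le_exp (-u)] : 1 - u ≤ exp (-u))
        (exp_pos u).le
      rwa [← exp_add, add_neg_cancel, exp_zero] at this
    rw [abs_of_nonneg (by linarith [add_one_le_exp u]), abs_of_nonneg hu]
    nlinarith [exp_le_exp.2 hub]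
  · rw [abs_of_nonpos (by linarith [exp_le_one_iff.2 hu]), abs_of_nonpos hu]
    nlinarith [add_one_le_exp u, one_le_exp hb]

lemma pow_mul_exp_neg_le {k : ℕ} (hk : k ≠ 0) {d t : ℝ} (hd : 0 < d) (ht : 0 < t) :
    t ^ k * exp (-d * t) ≤ (k ! / d ^ k + 1) * min t 1 := by
  have hC : 0 ≤ (k ! / d ^ k : ℝ) := by positivity
  rcases le_total t 1 with ht1 | ht1
  · rw [min_eq_left ht1]
    have h1 : t ^ k ≤ t := pow_le_of_le_one ht.le ht1 hk
    have h2 : exp (-d * t) ≤ 1 := exp_le_one_iff.2 (by nlinarith)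
    nlinarith [pow_pos ht k]
  · rw [min_eq_right ht1, mul_one]
    have h := pow_div_factorial_le_exp _ (mul_pos hd ht).le k
    rw [mul_pow, div_le_iff₀ (by positivity)] at h
    have : t ^ k * exp (-d * t) ≤ k ! / d ^ k := by
      rw [le_div_iff₀ (by positivity), neg_mul, exp_neg]
      calc t ^ k * (exp (d * t))⁻¹ * d ^ k = (d ^ k * t ^ k) * (exp (d * t))⁻¹ := by ring
        _ ≤ (exp (d * t) * k !) * (exp (d * t))⁻¹ := by gcongr
        _ = k ! := by field_simp
    linarith

lemma hasDerivAt_exp_neg_mul (t y : ℝ) :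
    HasDerivAt (fun y => exp (-y * t)) (-(t * exp (-y * t))) y := by
  simpa [mul_comm] using ((hasDerivAt_neg y).mul_const t).exp

end Real

namespace BernsteinFunction

lemma abs_one_sub_exp_le {a x t : ℝ} (ha : 0 ≤ a) (hx : -a ≤ x) (ht : 0 < t) :
    |1 - exp (-x * t)| ≤ (|x| + 1) * (min t 1 * exp (a * t)) := by
  have hxt : -x * t ≤ a * t := by nlinarith
  have hexp : exp (-x * t) ≤ exp (a * t) := exp_le_exp.2 hxt
  have hone : 1 ≤ exp (a * t) := one_le_exp (by positivity)
  rcases le_total t 1 with ht1 | ht1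
  · rw [min_eq_left ht1, abs_sub_comm]
    calc |exp (-x * t) - 1| ≤ |-x * t| * exp (a * t) :=
          abs_exp_sub_one_le_abs_mul_exp hxt (by positivity)
      _ = |x| * (t * exp (a * t)) := by rw [abs_mul, abs_neg, abs_of_pos ht, mul_assoc]
      _ ≤ (|x| + 1) * (t * exp (a * t)) := by gcongr; linarith
  · rw [min_eq_right ht1, one_mul]
    have : |1 - exp (-x * t)| ≤ exp (a * t) :=
      abs_sub_le_iff.2 ⟨by linarith [exp_pos (-x * t)], by linarith⟩
    nlinarith [abs_nonneg x]

noncomputable def laplaceMoment (ρ : Measure ℝ) (k : ℕ) (x : ℝ) : ℝ :=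
  ∫ t in Ioi 0, t ^ k * exp (-x * t) ∂ρ

noncomputable def bernsteinFun (β : ℝ) (ρ : Measure ℝ) (x : ℝ) : ℝ :=
  β * x + ∫ t in Ioi 0, (1 - exp (-x * t)) ∂ρ

variable {ρ : Measure ℝ} {a : ℝ}

lemma integrableOn_min_one_mul_exp (ha : 0 ≤ a) (hρ : IntegrableOn (fun t => min t 1) (Ioi 0) ρ)
    (hexp : IntegrableOn (fun t => exp (a * t)) (Ioi 1) ρ) :
    IntegrableOn (fun t => min t 1 * exp (a * t)) (Ioi 0) ρ := by
  rw [← Ioc_union_Ioi_eq_Ioi (zero_le_one' ℝ)]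
  refine IntegrableOn.union ?_ ?_
  · refine ((hρ.mono_set Ioc_subset_Ioi_self).mul_const (exp a)).mono' (by fun_prop) ?_
    filter_upwards [ae_restrict_mem measurableSet_Ioc] with t ht
    have hmin : 0 ≤ min t 1 := le_min ht.1.le zero_le_one
    rw [Real.norm_of_nonneg (by positivity)]
    exact mul_le_mul_of_nonneg_left (exp_le_exp.2 (by nlinarith [ht.1, ht.2])) hmin
  · refine hexp.congr_fun (fun t (ht : 1 < t) => ?_) measurableSet_Ioi
    rw [min_eq_right ht.le, one_mul]

lemma laplaceMoment_nonneg {k : ℕ} {x : ℝ} : 0 ≤ laplaceMoment ρ k x :=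
  setIntegral_nonneg measurableSet_Ioi fun t (ht : 0 < t) => by positivity

lemma integrableOn_pow_mul_exp (hρ : IntegrableOn (fun t => min t 1 * exp (a * t)) (Ioi 0) ρ)
    {k : ℕ} (hk : k ≠ 0) {x : ℝ} (hx : -a < x) :
    IntegrableOn (fun t => t ^ k * exp (-x * t)) (Ioi 0) ρ := by
  refine (hρ.const_mul (k ! / (x + a) ^ k + 1)).mono' (by fun_prop) ?_
  filter_upwards [ae_restrict_mem measurableSet_Ioi] with t (ht : 0 < t)
  have hsplit : t ^ k * exp (-x * t) = t ^ k * exp (-(x + a) * t) * exp (a * t) := by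
    rw [mul_assoc, ← exp_add]; ring_nf
  rw [Real.norm_of_nonneg (by positivity : 0 ≤ t ^ k * exp (-x * t)), hsplit, ← mul_assoc]
  exact mul_le_mul_of_nonneg_right (pow_mul_exp_neg_le hk (by linarith) ht) (exp_pos _).le

lemma integrableOn_one_sub_exp (ha : 0 ≤ a)
    (hρ : IntegrableOn (fun t => min t 1 * exp (a * t)) (Ioi 0) ρ) {x : ℝ} (hx : -a ≤ x) :
    IntegrableOn (fun t => 1 - exp (-x * t)) (Ioi 0) ρ := by
  refine (hρ.const_mul (|x| + 1)).mono' (by fun_prop) ?_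
  filter_upwards [ae_restrict_mem measurableSet_Ioi] with t ht
  exact abs_one_sub_exp_le ha hx ht

lemma hasDerivAt_laplaceMoment (hρ : IntegrableOn (fun t => min t 1 * exp (a * t)) (Ioi 0) ρ)
    {k : ℕ} (hk : k ≠ 0) {x : ℝ} (hx : -a < x) :
    HasDerivAt (laplaceMoment ρ k) (-laplaceMoment ρ (k + 1) x) x := by
  obtain ⟨c, hc, hcx⟩ := exists_between hx
  have key := hasDerivAt_integral_of_dominated_loc_of_deriv_le (μ := ρ.restrict (Ioi 0))
    (F := fun y t => t ^ k * exp (-y * t)) (F' := fun y t => -(t ^ (k + 1) * exp (-y * t)))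
    (bound := fun t => t ^ (k + 1) * exp (-c * t)) (Ioi_mem_nhds hcx)
    (.of_forall fun _ => by fun_prop) (integrableOn_pow_mul_exp hρ hk hx) (by fun_prop) ?_
    (integrableOn_pow_mul_exp hρ k.succ_ne_zero hc) ?_
  · rw [integral_neg] at key
    exact key.2
  · filter_upwards [ae_restrict_mem measurableSet_Ioi] with t (ht : 0 < t) y (hy : c < y)
    rw [norm_neg, Real.norm_of_nonneg (by positivity)]
    gcongr
  · filter_upwards with t y _
    exact ((hasDerivAt_exp_neg_mul t y).const_mul (t ^ k)).congr_deriv (by ring)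

lemma hasDerivAt_bernsteinFun (β : ℝ) (ha : 0 ≤ a)
    (hρ : IntegrableOn (fun t => min t 1 * exp (a * t)) (Ioi 0) ρ) {x : ℝ} (hx : -a < x) :
    HasDerivAt (bernsteinFun β ρ) (β + laplaceMoment ρ 1 x) x := by
  obtain ⟨c, hc, hcx⟩ := exists_between hx
  have key := hasDerivAt_integral_of_dominated_loc_of_deriv_le (μ := ρ.restrict (Ioi 0))
    (F := fun y t => 1 - exp (-y * t)) (F' := fun y t => t ^ 1 * exp (-y * t))
    (bound := fun t => t ^ 1 * exp (-c * t)) (Ioi_mem_nhds hcx)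
    (.of_forall fun _ => by fun_prop) (integrableOn_one_sub_exp ha hρ hx.le) (by fun_prop) ?_
    (integrableOn_pow_mul_exp hρ one_ne_zero hc) ?_
  · exact (((hasDerivAt_id x).const_mul β).add key.2).congr_deriv (by simp [laplaceMoment])
  · filter_upwards [ae_restrict_mem measurableSet_Ioi] with t (ht : 0 < t) y (hy : c < y)
    rw [Real.norm_of_nonneg (by positivity)]
    gcongr
  · filter_upwards with t y _
    exact ((hasDerivAt_exp_neg_mul t y).const_sub 1).congr_deriv (by ring)

lemma continuousWithinAt_bernsteinFun (β : ℝ) (ha : 0 ≤ a)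
    (hρ : IntegrableOn (fun t => min t 1 * exp (a * t)) (Ioi 0) ρ) :
    ContinuousWithinAt (bernsteinFun β ρ) (Ici (-a)) (-a) := by
  refine (continuous_const.mul continuous_id).continuousWithinAt.add ?_
  refine continuousWithinAt_of_dominated (bound := fun t => (a + 2) * (min t 1 * exp (a * t)))
    (.of_forall fun _ => by fun_prop) ?_ (hρ.const_mul _)
    (.of_forall fun _ => by fun_prop)
  filter_upwards [Icc_mem_nhdsGE (by linarith : -a < -a + 1)] with x hx
  filter_upwards [ae_restrict_mem measurableSet_Ioi] with t (ht : 0 < t)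
  have hxa : |x| ≤ a + 1 := abs_le.2 ⟨by linarith [hx.1], by linarith [hx.2]⟩
  refine (abs_one_sub_exp_le ha hx.1 ht).trans (mul_le_mul_of_nonneg_right ?_ (by positivity))
  linarith

lemma contDiffOn_laplaceMoment (hρ : IntegrableOn (fun t => min t 1 * exp (a * t)) (Ioi 0) ρ)
    (n : ℕ) {k : ℕ} (hk : k ≠ 0) : ContDiffOn ℝ n (laplaceMoment ρ k) (Ioi (-a)) := by
  induction n generalizing k with
  | zero =>
    exact contDiffOn_zero.2 fun x hx =>
      (hasDerivAt_laplaceMoment hρ hk hx).continuousAt.continuousWithinAt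
  | succ n ih =>
    exact_mod_cast contDiffOn_succ_of_hasDerivAt isOpen_Ioi
      (fun x hx => hasDerivAt_laplaceMoment hρ hk hx) (ih k.succ_ne_zero).neg

lemma contDiffOn_bernsteinFun (β : ℝ) (ha : 0 ≤ a)
    (hρ : IntegrableOn (fun t => min t 1 * exp (a * t)) (Ioi 0) ρ) :
    ContDiffOn ℝ ∞ (bernsteinFun β ρ) (Ioi (-a)) := by
  refine contDiffOn_infty.2 fun n => ?_
  cases n with
  | zero =>
    exact contDiffOn_zero.2 fun x hx =>
      (hasDerivAt_bernsteinFun β ha hρ hx).continuousAt.continuousWithinAt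
  | succ n =>
    exact_mod_cast contDiffOn_succ_of_hasDerivAt isOpen_Ioi
      (fun x hx => hasDerivAt_bernsteinFun β ha hρ hx)
      (contDiffOn_const.add (contDiffOn_laplaceMoment hρ n one_ne_zero))

lemma iteratedDeriv_succ_bernsteinFun (β : ℝ) (ha : 0 ≤ a)
    (hρ : IntegrableOn (fun t => min t 1 * exp (a * t)) (Ioi 0) ρ) (k : ℕ) {x : ℝ}
    (hx : -a < x) :
    iteratedDeriv (k + 1) (bernsteinFun β ρ) x =
      (if k = 0 then β else 0) + (-1) ^ k * laplaceMoment ρ (k + 1) x := by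
  induction k generalizing x with
  | zero => simp [(hasDerivAt_bernsteinFun β ha hρ hx).deriv]
  | succ k ih =>
    have hev : iteratedDeriv (k + 1) (bernsteinFun β ρ) =ᶠ[𝓝 x]
        fun y => (if k = 0 then β else 0) + (-1) ^ k * laplaceMoment ρ (k + 1) y :=
      eventually_of_mem (Ioi_mem_nhds hx) fun y hy => ih hy
    rw [iteratedDeriv_succ, hev.deriv_eq,
      (((hasDerivAt_laplaceMoment hρ k.succ_ne_zero hx).const_mul _).const_add _).deriv]
    simp [pow_succ]

lemma neg_one_pow_mul_iteratedDeriv_succ_bernsteinFun (β : ℝ) (ha : 0 ≤ a)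
    (hρ : IntegrableOn (fun t => min t 1 * exp (a * t)) (Ioi 0) ρ) (k : ℕ) {x : ℝ}
    (hx : -a < x) :
    (-1) ^ k * iteratedDeriv (k + 1) (bernsteinFun β ρ) x =
      (if k = 0 then β else 0) + laplaceMoment ρ (k + 1) x := by
  rw [iteratedDeriv_succ_bernsteinFun β ha hρ k hx, mul_add, ← mul_assoc, ← mul_pow]
  split_ifs <;> simp_all

lemma neg_one_pow_mul_iteratedDerivWithin_bernsteinFun_nonneg {β : ℝ} (hβ : 0 ≤ β) (ha : 0 ≤ a)
    (hρ : IntegrableOn (fun t => min t 1 * exp (a * t)) (Ioi 0) ρ) {k : ℕ} (hk : 1 ≤ k) {x : ℝ}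
    (hx : x ∈ Ioi (-a)) :
    0 ≤ (-1) ^ (k + 1) * iteratedDerivWithin k (bernsteinFun β ρ) (Ioi (-a)) x := by
  obtain ⟨j, rfl⟩ := Nat.exists_eq_add_of_le' hk
  rw [iteratedDerivWithin_of_isOpen isOpen_Ioi hx, show (-1 : ℝ) ^ (j + 1 + 1) = (-1) ^ j by ring,
    neg_one_pow_mul_iteratedDeriv_succ_bernsteinFun β ha hρ j hx]
  have := laplaceMoment_nonneg (ρ := ρ) (k := j + 1) (x := x)
  split_ifs <;> linarith

lemma sum_laplaceMoment_le_of_extension {β : ℝ} (hβ : 0 ≤ β)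
    (hρ : IntegrableOn (fun t => min t 1) (Ioi 0) ρ) {α : ℝ} (hα : -α < 1) {g : ℝ → ℝ}
    (hg : ContDiffOn ℝ ∞ g (Ioi (-α))) (hgf : EqOn g (bernsteinFun β ρ) (Ioi 0))
    (hsign : ∀ k : ℕ, ∀ y ∈ Ioi (-α), 0 ≤ (-1) ^ k * iteratedDeriv (k + 1) g y) {L : ℝ}
    (hL : Tendsto g (𝓝[>] (-α)) (𝓝 L)) (n : ℕ) :
    ∑ k ∈ Finset.range n, laplaceMoment ρ (k + 1) 1 * ((1 + α) ^ (k + 1) / (k + 1)!) ≤ g 1 - L := by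
  have hρ0 : IntegrableOn (fun t => min t 1 * exp (0 * t)) (Ioi 0) ρ := by simpa using hρ
  have hcoeff (k : ℕ) : laplaceMoment ρ (k + 1) 1 ≤ (-1) ^ k * iteratedDeriv (k + 1) g 1 := by
    rw [hgf.iteratedDeriv_of_isOpen isOpen_Ioi (k + 1) (mem_Ioi.2 one_pos),
      neg_one_pow_mul_iteratedDeriv_succ_bernsteinFun β le_rfl hρ0 k (by norm_num)]
    split_ifs <;> linarith
  have hbound : ∀ x ∈ Ioo (-α) 1,
      ∑ k ∈ Finset.range n, laplaceMoment ρ (k + 1) 1 * ((1 - x) ^ (k + 1) / (k + 1)!) ≤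
        g 1 - g x := by
    intro x hx
    refine le_trans (Finset.sum_le_sum fun k _ => ?_)
      (taylor_sum_le_sub_of_iteratedDeriv_alternating isOpen_Ioi
        (hg.of_le (by exact_mod_cast le_top)) hx.2 (fun y hy => hx.1.trans_le hy.1)
        fun y hy => hsign n y (hx.1.trans hy.1))
    rw [mul_div_assoc]
    have : 0 ≤ (1 - x) ^ (k + 1) / (k + 1)! := by have := hx.2.le; positivity
    exact mul_le_mul_of_nonneg_right (hcoeff k) this
  have hsum : Tendsto
      (fun x => ∑ k ∈ Finset.range n, laplaceMoment ρ (k + 1) 1 * ((1 - x) ^ (k + 1) / (k + 1)!))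
      (𝓝[>] (-α))
      (𝓝 (∑ k ∈ Finset.range n, laplaceMoment ρ (k + 1) 1 * ((1 + α) ^ (k + 1) / (k + 1)!))) := by
    refine Tendsto.mono_left ?_ nhdsWithin_le_nhds
    have hcont : Continuous fun x : ℝ =>
        ∑ k ∈ Finset.range n, laplaceMoment ρ (k + 1) 1 * ((1 - x) ^ (k + 1) / (k + 1)!) := by
      fun_prop
    simpa using hcont.tendsto (-α)
  exact le_of_tendsto_of_tendsto hsum (tendsto_const_nhds.sub hL)
    (eventually_of_mem (Ioo_mem_nhdsGT hα) hbound)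

lemma lintegral_exp_sub_one_mul_exp_le {b x M : ℝ} (hb : 0 ≤ b)
    (hint : ∀ k : ℕ, IntegrableOn (fun t => t ^ (k + 1) * exp (-x * t)) (Ioi 0) ρ)
    (hM : ∀ n : ℕ, ∑ k ∈ Finset.range n, laplaceMoment ρ (k + 1) x * (b ^ (k + 1) / (k + 1)!) ≤ M) :
    ∫⁻ t in Ioi 0, ENNReal.ofReal ((exp (b * t) - 1) * exp (-x * t)) ∂ρ ≤ ENNReal.ofReal M := by
  have hterm_nonneg (k : ℕ) {t : ℝ} (ht : 0 < t) :
      0 ≤ t ^ (k + 1) * exp (-x * t) * (b ^ (k + 1) / (k + 1)!) := by positivity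
  have hseries (t : ℝ) : HasSum (fun k : ℕ => t ^ (k + 1) * exp (-x * t) * (b ^ (k + 1) / (k + 1)!))
      ((exp (b * t) - 1) * exp (-x * t)) := by
    have h := (hasSum_nat_add_iff' 1).2 (NormedSpace.expSeries_div_hasSum_exp (b * t))
    rw [← exp_eq_exp_ℝ, Finset.sum_range_one, pow_zero, Nat.factorial_zero, Nat.cast_one,
      div_one] at h
    exact (h.mul_right (exp (-x * t))).congr_fun fun k => by ring
  calc ∫⁻ t in Ioi 0, ENNReal.ofReal ((exp (b * t) - 1) * exp (-x * t)) ∂ρ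
      = ∫⁻ t in Ioi 0, ∑' k : ℕ,
          ENNReal.ofReal (t ^ (k + 1) * exp (-x * t) * (b ^ (k + 1) / (k + 1)!)) ∂ρ := by
        refine setLIntegral_congr_fun measurableSet_Ioi fun t (ht : 0 < t) => ?_
        rw [← ENNReal.ofReal_tsum_of_nonneg (fun k => hterm_nonneg k ht) (hseries t).summable,
          (hseries t).tsum_eq]
    _ = ∑' k : ℕ, ENNReal.ofReal (laplaceMoment ρ (k + 1) x * (b ^ (k + 1) / (k + 1)!)) := by
        rw [lintegral_tsum fun k => by fun_prop]
        refine tsum_congr fun k => ?_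
        rw [← ofReal_integral_eq_lintegral_ofReal ((hint k).mul_const _), integral_mul_const]
        · rfl
        · filter_upwards [ae_restrict_mem measurableSet_Ioi] with t ht using hterm_nonneg k ht
    _ ≤ ENNReal.ofReal M := by
        refine ENNReal.tsum_le_of_sum_range_le fun n => ?_
        rw [← ENNReal.ofReal_sum_of_nonneg fun k _ => ?_]
        · exact ENNReal.ofReal_le_ofReal (hM n)
        · exact mul_nonneg laplaceMoment_nonneg (by positivity)

lemma lintegral_exp_lt_top_of_extension {β : ℝ} (hβ : 0 ≤ β)
    (hρ : IntegrableOn (fun t => min t 1) (Ioi 0) ρ) {α : ℝ} (hα : 0 ≤ α) {g : ℝ → ℝ}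
    (hg : ContDiffOn ℝ ∞ g (Ioi (-α))) (hgf : EqOn g (bernsteinFun β ρ) (Ioi 0))
    (hsign : ∀ k : ℕ, ∀ y ∈ Ioi (-α), 0 ≤ (-1) ^ k * iteratedDeriv (k + 1) g y) {L : ℝ}
    (hL : Tendsto g (𝓝[>] (-α)) (𝓝 L)) :
    ∫⁻ t in Ioi 1, ENNReal.ofReal (exp (α * t)) ∂ρ < ⊤ := by
  have hρ0 : IntegrableOn (fun t => min t 1 * exp (0 * t)) (Ioi 0) ρ := by simpa using hρ
  have hseries := lintegral_exp_sub_one_mul_exp_le (by linarith : 0 ≤ 1 + α)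
    (fun k => integrableOn_pow_mul_exp hρ0 k.succ_ne_zero (by norm_num : -(0 : ℝ) < 1))
    (sum_laplaceMoment_le_of_extension hβ hρ (by linarith) hg hgf hsign hL)
  have hpoint : ∀ t ∈ Ioi (1 : ℝ), ENNReal.ofReal (exp (α * t)) ≤
      ENNReal.ofReal 2 * ENNReal.ofReal ((exp ((1 + α) * t) - 1) * exp (-1 * t)) := by
    intro t (ht : 1 < t)
    rw [← ENNReal.ofReal_mul zero_le_two]
    refine ENNReal.ofReal_le_ofReal ?_
    have h2 : 2 ≤ exp ((1 + α) * t) := by nlinarith [add_one_le_exp ((1 + α) * t)]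
    have hsplit : exp (α * t) = exp ((1 + α) * t) * exp (-1 * t) := by
      rw [← exp_add]; ring_nf
    rw [hsplit]
    nlinarith [exp_pos (-1 * t)]
  calc ∫⁻ t in Ioi 1, ENNReal.ofReal (exp (α * t)) ∂ρ
      ≤ ∫⁻ t in Ioi 1, ENNReal.ofReal 2 *
          ENNReal.ofReal ((exp ((1 + α) * t) - 1) * exp (-1 * t)) ∂ρ :=
        setLIntegral_mono' measurableSet_Ioi hpoint
    _ ≤ ENNReal.ofReal 2 *
          ∫⁻ t in Ioi 0, ENNReal.ofReal ((exp ((1 + α) * t) - 1) * exp (-1 * t)) ∂ρ := by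
        rw [lintegral_const_mul' _ _ ENNReal.ofReal_ne_top]
        gcongr
        exact zero_le_one
    _ < ⊤ := ENNReal.mul_lt_top ENNReal.ofReal_lt_top (hseries.trans_lt ENNReal.ofReal_lt_top)

end BernsteinFunction

open BernsteinFunction

theorem bernstein_exponential_moment_iff_smooth_extension_general
    (β : ℝ) (hβ : 0 ≤ β)
    (ρ : Measure ℝ)
    (hρint : ∫⁻ t in Set.Ioi (0 : ℝ), ENNReal.ofReal (min t 1) ∂ρ < ⊤)
    (f : ℝ → ℝ)
    (hf : ∀ lam : ℝ, 0 < lam →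
      f lam = β * lam + ∫ t in Set.Ioi (0 : ℝ), (1 - Real.exp (-lam * t)) ∂ρ)
    (α : ℝ) (hα : 0 < α) :
    (∫⁻ t in Set.Ioi (1 : ℝ), ENNReal.ofReal (Real.exp (α * t)) ∂ρ < ⊤) ↔
    (∃ g : ℝ → ℝ,
      ContDiffOn ℝ (⊤ : ℕ∞) g (Set.Ioi (-α)) ∧
      (∀ lam : ℝ, 0 < lam → g lam = f lam) ∧
      (∀ k : ℕ, 1 ≤ k → ∀ x ∈ Set.Ioi (-α),
        0 ≤ (-1 : ℝ) ^ (k + 1) * iteratedDerivWithin k g (Set.Ioi (-α)) x) ∧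
      ∃ L : ℝ, Filter.Tendsto g (nhdsWithin (-α) (Set.Ioi (-α))) (nhds L)) := by
  have hρ : IntegrableOn (fun t => min t 1) (Ioi 0) ρ :=
    (lintegral_ofReal_ne_top_iff_integrable (by fun_prop)
      (ae_restrict_of_forall_mem measurableSet_Ioi fun t (ht : 0 < t) => by positivity)).1 hρint.ne
  constructor
  · intro hb
    have hexp : IntegrableOn (fun t => exp (α * t)) (Ioi 1) ρ :=
      (lintegral_ofReal_ne_top_iff_integrable (by fun_prop)
        (.of_forall fun t => (exp_pos _).le)).1 hb.ne
    have hρα := integrableOn_min_one_mul_exp hα.le hρ hexp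
    refine ⟨bernsteinFun β ρ, contDiffOn_bernsteinFun β hα.le hρα,
      fun lam hlam => (hf lam hlam).symm,
      fun k hk x hx => neg_one_pow_mul_iteratedDerivWithin_bernsteinFun_nonneg hβ hα.le hρα hk hx,
      _, ((continuousWithinAt_bernsteinFun β hα.le hρα).mono Ioi_subset_Ici_self).tendsto⟩
  · rintro ⟨g, hg, hgf, hsign, L, hL⟩
    refine lintegral_exp_lt_top_of_extension hβ hρ hα.le hg (fun lam hlam => ?_)
      (fun k y hy => ?_) hL
    · rw [hgf lam hlam, hf lam hlam]; rfl
    · simpa [pow_succ, iteratedDerivWithin_of_isOpen isOpen_Ioi hy] using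
        hsign (k + 1) (by omega) y hy

/-- Exponential moment characterization of left extension of a Bernstein function:
`∫_{(1,∞)} e^{αt} ρ(dt) < ∞` iff `f` has an extension `g` onto `(-α, ∞)`, infinitely
differentiable there, with `(-1)^{k+1} g^{(k)} ≥ 0` for all `k ≥ 1`, and continuous up to
`-α` (i.e. with a finite limit as `x → -α⁺`). -/
theorem bernstein_exponential_moment_iff_smooth_extension
    (β : ℝ) (hβ : 0 ≤ β)
    (ρ : Measure ℝ) (hρsupp : ρ (Set.Iic 0) = 0)
    (hρint : ∫⁻ t in Set.Ioi (0 : ℝ), ENNReal.ofReal (min t 1) ∂ρ < ⊤)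
    (f : ℝ → ℝ)
    (hf : ∀ lam : ℝ, 0 < lam →
      f lam = β * lam + ∫ t in Set.Ioi (0 : ℝ), (1 - Real.exp (-lam * t)) ∂ρ)
    (α : ℝ) (hα : 0 < α) :
    (∫⁻ t in Set.Ioi (1 : ℝ), ENNReal.ofReal (Real.exp (α * t)) ∂ρ < ⊤) ↔
    (∃ g : ℝ → ℝ,
      ContDiffOn ℝ (⊤ : ℕ∞) g (Set.Ioi (-α)) ∧
      (∀ lam : ℝ, 0 < lam → g lam = f lam) ∧
      (∀ k : ℕ, 1 ≤ k → ∀ x ∈ Set.Ioi (-α),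
        0 ≤ (-1 : ℝ) ^ (k + 1) * iteratedDerivWithin k g (Set.Ioi (-α)) x) ∧
      ∃ L : ℝ, Filter.Tendsto g (nhdsWithin (-α) (Set.Ioi (-α))) (nhds L)) :=
  bernstein_exponential_moment_iff_smooth_extension_general β hβ ρ hρint f hf α hα
end

section
/- Let β ≥ 0, let ρ be a measure on (0,∞) with ∫_{(0,∞)} min(t,1) ρ(dt) < ∞, let α > 0, and assume ∫_{(1,∞)} e^{αt} ρ(dt) < ∞. Then for every ζ ∈ ℂ with Re ζ > −α the integral ∫_{(0,∞)} (1 − e^{−ζt}) ρ(dt) converges absolutely, and the function F(ζ) = βζ + ∫_{(0,∞)} (1 − e^{−ζt}) ρ(dt) is holomorphic on the half-plane {ζ ∈ ℂ : Re ζ > −α} and agrees on (0,∞) with the Bernstein function f(λ) = βλ + ∫_{(0,∞)} (1 − e^{−λt}) ρ(dt). -/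
/-!
Both the integrand `1 - e^{-ζt}` and its `ζ`-derivative `t e^{-ζt}` are dominated, locally
uniformly in `ζ` on `{Re ζ > -α}`, by a multiple of `min t 1 + 1_{t > 1} e^{αt}`, which is
`ρ`-integrable by the two moment assumptions. For `t ≤ 1` this comes from the mean value
inequality in `ζ` (the integrand vanishes at `ζ = 0`); for `t > 1` from `|e^{-ζt}| ≤ e^{αt}`,
and, for the derivative, from `t ≤ e^{εt}/ε`. Dominated differentiation under the integral then
gives holomorphy, and on the real axis the complex integral is the cast of the real one.
-/

open MeasureTheory Set

noncomputable def bernsteinWeight (α t : ℝ) : ℝ :=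
  min t 1 + (Ioi 1).indicator (fun t => Real.exp (α * t)) t

lemma bernsteinWeight_of_le_one {α t : ℝ} (ht : t ≤ 1) : bernsteinWeight α t = t := by
  simp [bernsteinWeight, ht, not_lt.2 ht]

lemma bernsteinWeight_of_one_lt {α t : ℝ} (ht : 1 < t) :
    bernsteinWeight α t = 1 + Real.exp (α * t) := by
  simp [bernsteinWeight, ht, ht.le]

lemma integrable_bernsteinWeight {ρ : Measure ℝ} {α : ℝ}
    (hρint : ∫⁻ t in Ioi (0 : ℝ), ENNReal.ofReal (min t 1) ∂ρ < ⊤)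
    (hexp : ∫⁻ t in Ioi (1 : ℝ), ENNReal.ofReal (Real.exp (α * t)) ∂ρ < ⊤) :
    Integrable (bernsteinWeight α) (ρ.restrict (Ioi 0)) := by
  have hmin : Integrable (fun t => min t 1) (ρ.restrict (Ioi 0)) := by
    refine (lintegral_ofReal_ne_top_iff_integrable (by fun_prop) ?_).1 hρint.ne
    filter_upwards [ae_restrict_mem measurableSet_Ioi] with t ht
    exact le_min ht.le zero_le_one
  have hexp' : IntegrableOn (fun t => Real.exp (α * t)) (Ioi 1) ρ :=
    (lintegral_ofReal_ne_top_iff_integrable (by fun_prop)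
      (ae_of_all _ fun t => (Real.exp_pos _).le)).1 hexp.ne
  refine hmin.add ?_
  rw [integrable_indicator_iff measurableSet_Ioi, IntegrableOn,
    Measure.restrict_restrict measurableSet_Ioi, Ioi_inter_Ioi, sup_of_le_left zero_le_one]
  exact hexp'

lemma hasDerivAt_one_sub_cexp_neg_mul (ζ w : ℂ) :
    HasDerivAt (fun z : ℂ => 1 - Complex.exp (-(z * w))) (w * Complex.exp (-(ζ * w))) ζ :=
  (((hasDerivAt_mul_const w).neg.cexp).const_sub 1).congr_deriv
    (by simp only [Pi.neg_apply]; ring)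

lemma norm_ofReal_mul_cexp_neg_mul_le_of_le_one (ζ : ℂ) {t : ℝ} (ht₀ : 0 ≤ t) (ht₁ : t ≤ 1) :
    ‖(t : ℂ) * Complex.exp (-(ζ * t))‖ ≤ Real.exp ‖ζ‖ * t := by
  rw [norm_mul, Complex.norm_real, Real.norm_of_nonneg ht₀, Complex.norm_exp, mul_comm]
  gcongr
  calc (-(ζ * t)).re ≤ ‖-(ζ * t)‖ := Complex.re_le_norm _
    _ = ‖ζ‖ * t := by rw [norm_neg, norm_mul, Complex.norm_real, Real.norm_of_nonneg ht₀]
    _ ≤ ‖ζ‖ := mul_le_of_le_one_right (norm_nonneg ζ) ht₁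

lemma norm_ofReal_mul_cexp_neg_mul_le {α ε : ℝ} {ζ : ℂ} (hε : 0 < ε) (hζ : -α + ε ≤ ζ.re)
    {t : ℝ} (ht : 0 ≤ t) :
    ‖(t : ℂ) * Complex.exp (-(ζ * t))‖ ≤ ε⁻¹ * Real.exp (α * t) := by
  rw [norm_mul, Complex.norm_real, Real.norm_of_nonneg ht, Complex.norm_exp]
  have ht_le : t ≤ ε⁻¹ * Real.exp (ε * t) := by
    rw [le_inv_mul_iff₀ hε]
    linarith [Real.add_one_le_exp (ε * t)]
  calc t * Real.exp (-(ζ * t)).re ≤ ε⁻¹ * Real.exp (ε * t) * Real.exp ((α - ε) * t) := by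
        gcongr
        simp only [Complex.neg_re, Complex.mul_re, Complex.ofReal_re, Complex.ofReal_im,
          mul_zero, sub_zero]
        nlinarith
    _ = ε⁻¹ * Real.exp (α * t) := by rw [mul_assoc, ← Real.exp_add]; ring_nf

lemma norm_one_sub_cexp_neg_mul_le_of_le_one (ζ : ℂ) {t : ℝ} (ht₀ : 0 ≤ t) (ht₁ : t ≤ 1) :
    ‖1 - Complex.exp (-(ζ * t))‖ ≤ ‖ζ‖ * Real.exp ‖ζ‖ * t := by
  have h_deriv_le : ∀ z ∈ Metric.closedBall (0 : ℂ) ‖ζ‖,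
      ‖(t : ℂ) * Complex.exp (-(z * t))‖ ≤ Real.exp ‖ζ‖ * t := fun z hz =>
    (norm_ofReal_mul_cexp_neg_mul_le_of_le_one z ht₀ ht₁).trans
      (by gcongr; exact mem_closedBall_zero_iff.1 hz)
  have hmvt := (convex_closedBall (0 : ℂ) ‖ζ‖).norm_image_sub_le_of_norm_hasDerivWithin_le
    (fun z _ => (hasDerivAt_one_sub_cexp_neg_mul z t).hasDerivWithinAt) h_deriv_le
    (Metric.mem_closedBall_self (norm_nonneg ζ)) (mem_closedBall_zero_iff.2 le_rfl)
  simpa [mul_comm, mul_left_comm] using hmvt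

lemma norm_one_sub_cexp_neg_mul_le {α : ℝ} {ζ : ℂ} (hζ : -α ≤ ζ.re) {t : ℝ} (ht : 0 ≤ t) :
    ‖1 - Complex.exp (-(ζ * t))‖ ≤ 1 + Real.exp (α * t) := by
  calc ‖1 - Complex.exp (-(ζ * t))‖ ≤ ‖(1 : ℂ)‖ + ‖Complex.exp (-(ζ * t))‖ := norm_sub_le _ _
    _ = 1 + Real.exp (-(ζ.re * t)) := by simp [Complex.norm_exp, Complex.mul_re]
    _ ≤ 1 + Real.exp (α * t) := by gcongr; nlinarith

section Domination

variable {α : ℝ} {ζ : ℂ} {t : ℝ}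

lemma norm_one_sub_cexp_neg_mul_le_bernsteinWeight (hζ : -α ≤ ζ.re) (ht : 0 < t) :
    ‖1 - Complex.exp (-(ζ * t))‖ ≤ (‖ζ‖ * Real.exp ‖ζ‖ + 1) * bernsteinWeight α t := by
  rcases le_or_gt t 1 with ht₁ | ht₁
  · rw [bernsteinWeight_of_le_one ht₁]
    exact (norm_one_sub_cexp_neg_mul_le_of_le_one ζ ht.le ht₁).trans
      (mul_le_mul_of_nonneg_right (le_add_of_nonneg_right zero_le_one) ht.le)
  · rw [bernsteinWeight_of_one_lt ht₁]
    refine (norm_one_sub_cexp_neg_mul_le hζ ht.le).trans (le_mul_of_one_le_left ?_ ?_)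
    · positivity
    · linarith [mul_nonneg (norm_nonneg ζ) (Real.exp_pos ‖ζ‖).le]

lemma norm_ofReal_mul_cexp_neg_mul_le_bernsteinWeight {ε M : ℝ} (hε : 0 < ε)
    (hζ : -α + ε ≤ ζ.re) (hM : ‖ζ‖ ≤ M) (ht : 0 < t) :
    ‖(t : ℂ) * Complex.exp (-(ζ * t))‖ ≤ (Real.exp M + ε⁻¹) * bernsteinWeight α t := by
  rcases le_or_gt t 1 with ht₁ | ht₁
  · rw [bernsteinWeight_of_le_one ht₁]
    refine (norm_ofReal_mul_cexp_neg_mul_le_of_le_one ζ ht.le ht₁).trans ?_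
    gcongr
    exact (Real.exp_le_exp.2 hM).trans (le_add_of_nonneg_right (inv_pos.2 hε).le)
  · rw [bernsteinWeight_of_one_lt ht₁]
    refine (norm_ofReal_mul_cexp_neg_mul_le hε hζ ht.le).trans ?_
    gcongr
    · exact le_add_of_nonneg_left (Real.exp_pos M).le
    · exact le_add_of_nonneg_left zero_le_one

end Domination

section Integral

variable {ρ : Measure ℝ} {α : ℝ}

lemma integrable_one_sub_cexp_neg_mul
    (hρint : ∫⁻ t in Ioi (0 : ℝ), ENNReal.ofReal (min t 1) ∂ρ < ⊤)
    (hexp : ∫⁻ t in Ioi (1 : ℝ), ENNReal.ofReal (Real.exp (α * t)) ∂ρ < ⊤)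
    {ζ : ℂ} (hζ : -α ≤ ζ.re) :
    Integrable (fun t : ℝ => 1 - Complex.exp (-(ζ * t))) (ρ.restrict (Ioi 0)) := by
  refine ((integrable_bernsteinWeight hρint hexp).const_mul (‖ζ‖ * Real.exp ‖ζ‖ + 1)).mono'
    (by fun_prop) ?_
  filter_upwards [ae_restrict_mem measurableSet_Ioi] with t ht
  exact norm_one_sub_cexp_neg_mul_le_bernsteinWeight hζ ht

lemma hasDerivAt_integral_one_sub_cexp_neg_mul
    (hρint : ∫⁻ t in Ioi (0 : ℝ), ENNReal.ofReal (min t 1) ∂ρ < ⊤)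
    (hexp : ∫⁻ t in Ioi (1 : ℝ), ENNReal.ofReal (Real.exp (α * t)) ∂ρ < ⊤)
    {ζ₀ : ℂ} (hζ₀ : -α < ζ₀.re) :
    HasDerivAt (fun ζ : ℂ => ∫ t in Ioi (0 : ℝ), (1 - Complex.exp (-(ζ * t))) ∂ρ)
      (∫ t in Ioi (0 : ℝ), (t : ℂ) * Complex.exp (-(ζ₀ * t)) ∂ρ) ζ₀ := by
  obtain ⟨ε, hε, hζ₀ε⟩ : ∃ ε > 0, -α + ε ≤ ζ₀.re - ε :=
    ⟨(ζ₀.re + α) / 2, by linarith, by linarith⟩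
  have h_ball : ∀ ζ ∈ Metric.ball ζ₀ ε, -α + ε ≤ ζ.re ∧ ‖ζ‖ ≤ ‖ζ₀‖ + ε := by
    intro ζ hζ
    rw [Metric.mem_ball, dist_eq_norm] at hζ
    have hre := (abs_lt.1 ((Complex.abs_re_le_norm (ζ - ζ₀)).trans_lt hζ)).1
    rw [Complex.sub_re] at hre
    constructor <;> linarith [norm_le_norm_add_norm_sub' ζ ζ₀]
  refine (hasDerivAt_integral_of_dominated_loc_of_deriv_le (Metric.ball_mem_nhds ζ₀ hε)
    (Filter.Eventually.of_forall fun ζ => by fun_prop)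
    (integrable_one_sub_cexp_neg_mul hρint hexp hζ₀.le) (by fun_prop) ?_
    ((integrable_bernsteinWeight hρint hexp).const_mul (Real.exp (‖ζ₀‖ + ε) + ε⁻¹))
    (ae_of_all _ fun t ζ _ => hasDerivAt_one_sub_cexp_neg_mul ζ t)).2
  filter_upwards [ae_restrict_mem measurableSet_Ioi] with t ht ζ hζ
  exact norm_ofReal_mul_cexp_neg_mul_le_bernsteinWeight hε (h_ball ζ hζ).1 (h_ball ζ hζ).2 ht

end Integral

lemma integral_one_sub_cexp_neg_ofReal_mul (μ : Measure ℝ) (lam : ℝ) :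
    ∫ t, (1 - Complex.exp (-((lam : ℂ) * t))) ∂μ = ↑(∫ t, (1 - Real.exp (-lam * t)) ∂μ) := by
  rw [← integral_complex_ofReal]
  congr 1 with t
  push_cast
  ring_nf

theorem bernstein_holomorphic_extension_general
    (β : ℝ)
    (ρ : Measure ℝ)
    (hρint : ∫⁻ t in Set.Ioi (0 : ℝ), ENNReal.ofReal (min t 1) ∂ρ < ⊤)
    (α : ℝ)
    (hexp : ∫⁻ t in Set.Ioi (1 : ℝ), ENNReal.ofReal (Real.exp (α * t)) ∂ρ < ⊤) :
    (∀ ζ : ℂ, -α < ζ.re →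
      Integrable (fun t : ℝ => 1 - Complex.exp (-(ζ * t))) (ρ.restrict (Set.Ioi 0))) ∧
    DifferentiableOn ℂ
      (fun ζ : ℂ => (β : ℂ) * ζ + ∫ t in Set.Ioi (0 : ℝ), (1 - Complex.exp (-(ζ * t))) ∂ρ)
      {ζ : ℂ | -α < ζ.re} ∧
    ∀ lam : ℝ, 0 < lam →
      (β : ℂ) * (lam : ℂ) + ∫ t in Set.Ioi (0 : ℝ), (1 - Complex.exp (-((lam : ℂ) * t))) ∂ρ
        = ((β * lam + ∫ t in Set.Ioi (0 : ℝ), (1 - Real.exp (-lam * t)) ∂ρ : ℝ) : ℂ) := by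
  refine ⟨fun ζ hζ => integrable_one_sub_cexp_neg_mul hρint hexp hζ.le, ?_, ?_⟩
  · intro ζ₀ hζ₀
    have h_int := (hasDerivAt_integral_one_sub_cexp_neg_mul hρint hexp hζ₀).differentiableAt
    exact ((differentiableAt_id.const_mul _).add h_int).differentiableWithinAt
  · intro lam _
    rw [integral_one_sub_cexp_neg_ofReal_mul]
    push_cast
    rfl

/-- If the Lévy measure `ρ` of a Bernstein function has a finite exponential moment of order
`α > 0`, then the defining integral converges absolutely for every `ζ ∈ ℂ` with `Re ζ > -α`,
and `F(ζ) = βζ + ∫ (1 - e^{-ζt}) ρ(dt)` is holomorphic on the half-plane `{Re ζ > -α}` and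
agrees with the Bernstein function `f` on `(0, ∞)`. -/
theorem bernstein_holomorphic_extension
    (β : ℝ) (hβ : 0 ≤ β)
    (ρ : Measure ℝ) (hρsupp : ρ (Set.Iic 0) = 0)
    (hρint : ∫⁻ t in Set.Ioi (0 : ℝ), ENNReal.ofReal (min t 1) ∂ρ < ⊤)
    (α : ℝ) (hα : 0 < α)
    (hexp : ∫⁻ t in Set.Ioi (1 : ℝ), ENNReal.ofReal (Real.exp (α * t)) ∂ρ < ⊤) :
    (∀ ζ : ℂ, -α < ζ.re →
      Integrable (fun t : ℝ => 1 - Complex.exp (-(ζ * t))) (ρ.restrict (Set.Ioi 0))) ∧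
    DifferentiableOn ℂ
      (fun ζ : ℂ => (β : ℂ) * ζ + ∫ t in Set.Ioi (0 : ℝ), (1 - Complex.exp (-(ζ * t))) ∂ρ)
      {ζ : ℂ | -α < ζ.re} ∧
    ∀ lam : ℝ, 0 < lam →
      (β : ℂ) * (lam : ℂ) + ∫ t in Set.Ioi (0 : ℝ), (1 - Complex.exp (-((lam : ℂ) * t))) ∂ρ
        = ((β * lam + ∫ t in Set.Ioi (0 : ℝ), (1 - Real.exp (-lam * t)) ∂ρ : ℝ) : ℂ) :=
  bernstein_holomorphic_extension_general β ρ hρint α hexp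
end

section
/- Let β ≥ 0 and let ρ be a measure on (0,∞) with ∫_{(0,∞)} min(t,1) ρ(dt) < ∞, and define the Bernstein function f(λ) = βλ + ∫_{(0,∞)} (1 − e^{−λt}) ρ(dt) on (0,∞). Let α > 0 and suppose g : (−α,∞) → ℝ is real-analytic and g = f on (0,∞). Then (−1)^{k+1} g^{(k)}(x) ≥ 0 for every integer k ≥ 1 and every x ∈ (−α,∞). -/
/-!
On `(0, ∞)` the derivative of the Bernstein function is `β + ∫ t e^{-λt} ρ(dt)`, a completely
monotone function: its `n`-th derivative is `(-1)^n ∫ t^{n+1} e^{-λt} ρ(dt)`. Complete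
monotonicity of an analytic function propagates to the left. If all `(-1)^n φ^{(n)}(c)` are
nonnegative, then for `x ≤ c` close to `c` the Taylor expansion
`(-1)^n φ^{(n)}(x) = ∑ₘ (c - x)^m / m! · (-1)^{n+m} φ^{(n+m)}(c)` has nonnegative terms, and
a continuous induction leftwards along the domain of analyticity covers all of `(-α, ∞)`.
-/

open MeasureTheory Set Filter Topology Real

section Taylor

variable {𝕜 F : Type*} [NontriviallyNormedField 𝕜] [NormedAddCommGroup F] [NormedSpace 𝕜 F]
  [CompleteSpace F] {f : 𝕜 → F} {p : FormalMultilinearSeries 𝕜 𝕜 F} {c : 𝕜} {r : ENNReal}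

theorem HasFPowerSeriesOnBall.exists_hasFPowerSeriesOnBall_deriv
    (h : HasFPowerSeriesOnBall f p c r) :
    ∃ q : FormalMultilinearSeries 𝕜 𝕜 F, HasFPowerSeriesOnBall (deriv f) q c r := by
  let evalOne : (𝕜 →L[𝕜] F) →L[𝕜] F := ContinuousLinearMap.apply 𝕜 F 1
  refine ⟨evalOne.compFormalMultilinearSeries p.derivSeries, ?_⟩
  convert evalOne.comp_hasFPowerSeriesOnBall h.fderiv using 1
  ext x
  simp [evalOne]

theorem HasFPowerSeriesOnBall.exists_hasFPowerSeriesOnBall_iteratedDeriv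
    (h : HasFPowerSeriesOnBall f p c r) (n : ℕ) :
    ∃ q : FormalMultilinearSeries 𝕜 𝕜 F, HasFPowerSeriesOnBall (iteratedDeriv n f) q c r := by
  induction n with
  | zero => exact ⟨p, by simpa using h⟩
  | succ n ih =>
    obtain ⟨q, hq⟩ := ih
    rw [iteratedDeriv_succ]
    exact hq.exists_hasFPowerSeriesOnBall_deriv

theorem HasFPowerSeriesOnBall.hasSum_iteratedDeriv [CharZero 𝕜]
    (h : HasFPowerSeriesOnBall f p c r) (n : ℕ) {y : 𝕜} (hy : ‖y‖ₑ < r) :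
    HasSum (fun m : ℕ => ((m.factorial : 𝕜)⁻¹ * y ^ m) • iteratedDeriv (n + m) f c)
      (iteratedDeriv n f (c + y)) := by
  obtain ⟨q, hq⟩ := h.exists_hasFPowerSeriesOnBall_iteratedDeriv n
  convert hq.hasSum_iteratedFDeriv (y := y) (by simpa using hy) using 2 with m
  rw [iteratedFDeriv_apply_eq_iteratedDeriv_mul_prod, iteratedDeriv_eq_iterate,
    iteratedDeriv_eq_iterate, iteratedDeriv_eq_iterate, ← Function.iterate_add_apply, add_comm]
  simp [mul_smul]

end Taylor

def CompletelyMonotoneAt (φ : ℝ → ℝ) (x : ℝ) : Prop :=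
  ∀ n : ℕ, 0 ≤ (-1) ^ n * iteratedDeriv n φ x

namespace CompletelyMonotoneAt

variable {φ : ℝ → ℝ} {c : ℝ}

theorem congr_of_eventuallyEq {ψ : ℝ → ℝ} (h : CompletelyMonotoneAt φ c) (hψ : ψ =ᶠ[𝓝 c] φ) :
    CompletelyMonotoneAt ψ c := fun n => by
  rw [hψ.iteratedDeriv_eq]
  exact h n

theorem of_hasFPowerSeriesOnBall {p : FormalMultilinearSeries ℝ ℝ ℝ} {r : ENNReal}
    (hp : HasFPowerSeriesOnBall φ p c r) (hc : CompletelyMonotoneAt φ c) {x : ℝ} (hxc : x ≤ c)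
    (hxr : edist x c < r) : CompletelyMonotoneAt φ x := by
  intro n
  have hsum := (hp.hasSum_iteratedDeriv n (y := x - c) (by rwa [← edist_eq_enorm_sub])).mul_left
    ((-1) ^ n)
  rw [add_sub_cancel] at hsum
  refine hasSum_le (fun m => ?_) hasSum_zero hsum
  have hterm : (-1) ^ n * (((m.factorial : ℝ)⁻¹ * (x - c) ^ m) * iteratedDeriv (n + m) φ c)
      = (m.factorial : ℝ)⁻¹ * (c - x) ^ m * ((-1) ^ (n + m) * iteratedDeriv (n + m) φ c) := by
    rw [show x - c = -1 * (c - x) by ring, mul_pow, pow_add]; ring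
  rw [smul_eq_mul, hterm]
  have hcoeff := hc (n + m)
  have hcx : 0 ≤ c - x := sub_nonneg.2 hxc
  positivity

theorem exists_pos_forall_Ioc (hφ : AnalyticAt ℝ φ c) (hc : CompletelyMonotoneAt φ c) :
    ∃ δ > 0, ∀ x ∈ Ioc (c - δ) c, CompletelyMonotoneAt φ x := by
  obtain ⟨p, r, hp⟩ := hφ
  obtain ⟨δ, -, hδ, hδr⟩ := ENNReal.lt_iff_exists_real_btwn.1 hp.r_pos
  refine ⟨δ, ENNReal.ofReal_pos.1 hδ, fun x hx =>
    hc.of_hasFPowerSeriesOnBall hp hx.2 (lt_of_le_of_lt ?_ hδr)⟩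
  rw [edist_dist, Real.dist_eq, abs_of_nonpos (by linarith [hx.2])]
  exact ENNReal.ofReal_le_ofReal (by linarith [hx.1])

end CompletelyMonotoneAt

theorem AnalyticOnNhd.completelyMonotoneAt_of_forall_gt {φ : ℝ → ℝ} {a b : ℝ}
    (hφ : AnalyticOnNhd ℝ φ (Ioi a)) (hb : ∀ x ∈ Ioi b, CompletelyMonotoneAt φ x) :
    ∀ x ∈ Ioi a, CompletelyMonotoneAt φ x := by
  intro x hx
  rcases lt_or_ge b x with hbx | hxb
  · exact hb x hbx
  have hcont (n : ℕ) :
      ContinuousOn (fun y => (-1) ^ n * iteratedDeriv n φ y) (Icc x (b + 1)) := by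
    rw [iteratedDeriv_eq_iterate]
    exact continuousOn_const.mul
      ((hφ.iterated_deriv n).continuousOn.mono fun y hy => hx.trans_le hy.1)
  have hclosed : IsClosed ({y | CompletelyMonotoneAt φ y} ∩ Icc x (b + 1)) := by
    have : {y | CompletelyMonotoneAt φ y} ∩ Icc x (b + 1)
        = ⋂ n : ℕ, Icc x (b + 1) ∩ (fun y => (-1) ^ n * iteratedDeriv n φ y) ⁻¹' Ici 0 := by
      ext y
      simp only [CompletelyMonotoneAt, mem_inter_iff, mem_ofPred_eq, mem_iInter,
        mem_preimage, mem_Ici]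
      exact ⟨fun h n => ⟨h.2, h.1 n⟩, fun h => ⟨fun n => (h n).2, (h 0).1⟩⟩
    rw [this]
    exact isClosed_iInter fun n => (hcont n).preimage_isClosed_of_isClosed isClosed_Icc isClosed_Ici
  refine hclosed.mem_of_ge_of_forall_exists_lt (hb _ (lt_add_one b)) (by linarith) ?_
  rintro y ⟨hy, hxy, -⟩
  obtain ⟨δ, hδ, hIoc⟩ := hy.exists_pos_forall_Ioc (hφ y (hx.trans hxy))
  refine ⟨max x (y - δ / 2), hIoc _ ⟨?_, ?_⟩, le_max_left _ _, max_lt hxy (by linarith)⟩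
  · exact lt_max_of_lt_right (by linarith)
  · exact max_le hxy.le (by linarith)

theorem pow_mul_exp_neg_mul_le (n : ℕ) {c t : ℝ} (hc : 0 < c) (ht : 0 ≤ t) :
    t ^ n * exp (-c * t) ≤ n.factorial / c ^ n := by
  have h := Real.pow_div_factorial_le_exp (c * t) (by positivity) n
  rw [div_le_iff₀ (by positivity)] at h
  rw [le_div_iff₀ (by positivity), mul_right_comm, ← mul_pow, neg_mul, exp_neg]
  calc (t * c) ^ n * (exp (c * t))⁻¹ ≤ exp (c * t) * n.factorial * (exp (c * t))⁻¹ := by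
        gcongr; rwa [mul_comm t]
    _ = n.factorial := by field_simp

theorem pow_succ_mul_exp_neg_mul_le (n : ℕ) {c t : ℝ} (hc : 0 < c) (ht : 0 ≤ t) :
    t ^ (n + 1) * exp (-c * t)
      ≤ (n.factorial / c ^ n + (n + 1).factorial / c ^ (n + 1)) * min t 1 := by
  have hA : 0 ≤ (n.factorial : ℝ) / c ^ n := by positivity
  have hB : 0 ≤ ((n + 1).factorial : ℝ) / c ^ (n + 1) := by positivity
  rcases le_total t 1 with h1 | h1
  · rw [min_eq_left h1, pow_succ, mul_right_comm]
    calc t ^ n * exp (-c * t) * t ≤ n.factorial / c ^ n * t := by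
          gcongr; exact pow_mul_exp_neg_mul_le n hc ht
      _ ≤ _ := by gcongr; linarith
  · rw [min_eq_right h1, mul_one]
    linarith [pow_mul_exp_neg_mul_le (n + 1) hc ht]

theorem one_sub_exp_neg_mul_le (c : ℝ) {t : ℝ} (ht : 0 ≤ t) :
    1 - exp (-c * t) ≤ max c 1 * min t 1 := by
  rcases le_total t 1 with h1 | h1
  · rw [min_eq_left h1]
    calc 1 - exp (-c * t) ≤ c * t := by linarith [add_one_le_exp (-c * t)]
      _ ≤ max c 1 * t := by gcongr; exact le_max_left _ _
  · rw [min_eq_right h1, mul_one]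
    linarith [exp_pos (-c * t), le_max_right c 1]

section Laplace

variable {μ : Measure ℝ} (hμ : ∀ᵐ t ∂μ, 0 ≤ t) (hmin : Integrable (fun t => min t 1) μ)
include hμ hmin

theorem integrable_pow_succ_mul_exp_neg_mul (n : ℕ) {c : ℝ} (hc : 0 < c) :
    Integrable (fun t => t ^ (n + 1) * exp (-c * t)) μ := by
  refine (hmin.const_mul (n.factorial / c ^ n + (n + 1).factorial / c ^ (n + 1))).mono'
    (by fun_prop) ?_
  filter_upwards [hμ] with t ht
  rw [norm_of_nonneg (by positivity)]
  exact pow_succ_mul_exp_neg_mul_le n hc ht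

theorem integrable_one_sub_exp_neg_mul {c : ℝ} (hc : 0 ≤ c) :
    Integrable (fun t => 1 - exp (-c * t)) μ := by
  refine (hmin.const_mul (max c 1)).mono' (by fun_prop) ?_
  filter_upwards [hμ] with t ht
  have hexp : exp (-c * t) ≤ 1 := exp_le_one_iff.2 (by nlinarith)
  rw [norm_of_nonneg (by linarith)]
  exact one_sub_exp_neg_mul_le c ht

theorem hasDerivAt_integral_of_hasDerivAt_pow_succ_mul_exp {F : ℝ → ℝ → ℝ} (σ : ℝ) (n : ℕ)
    {c : ℝ} (hc : 0 < c) (hF_meas : ∀ x, AEStronglyMeasurable (F x) μ) (hF_int : Integrable (F c) μ)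
    (hF : ∀ x t, HasDerivAt (fun x => F x t) (σ * (t ^ (n + 1) * exp (-x * t))) x) :
    HasDerivAt (fun x => ∫ t, F x t ∂μ) (σ * ∫ t, t ^ (n + 1) * exp (-c * t) ∂μ) c := by
  have hc2 : 0 < c / 2 := half_pos hc
  have key := hasDerivAt_integral_of_dominated_loc_of_deriv_le (μ := μ) (F := F)
    (F' := fun x t => σ * (t ^ (n + 1) * exp (-x * t))) (Metric.ball_mem_nhds c hc2)
    (Eventually.of_forall hF_meas) hF_int (by fun_prop) ?_
    ((hmin.const_mul (n.factorial / (c / 2) ^ n + (n + 1).factorial / (c / 2) ^ (n + 1)))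
      |>.const_mul |σ|) (Eventually.of_forall fun t x _ => hF x t)
  · rw [← integral_const_mul]; exact key.2
  · filter_upwards [hμ] with t ht x hx
    have hx2 : c / 2 ≤ x := by linarith [(abs_lt.1 (mem_ball_iff_norm.1 hx)).1]
    rw [norm_mul, Real.norm_eq_abs, norm_of_nonneg (by positivity)]
    refine mul_le_mul_of_nonneg_left ?_ (abs_nonneg σ)
    calc t ^ (n + 1) * exp (-x * t) ≤ t ^ (n + 1) * exp (-(c / 2) * t) := by gcongr
      _ ≤ _ := pow_succ_mul_exp_neg_mul_le n hc2 ht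

theorem hasDerivAt_integral_pow_succ_mul_exp (n : ℕ) {c : ℝ} (hc : 0 < c) :
    HasDerivAt (fun x => ∫ t, t ^ (n + 1) * exp (-x * t) ∂μ)
      (-∫ t, t ^ (n + 2) * exp (-c * t) ∂μ) c := by
  simpa using hasDerivAt_integral_of_hasDerivAt_pow_succ_mul_exp hμ hmin
    (F := fun x t => t ^ (n + 1) * exp (-x * t)) (-1) (n + 1) hc (fun _ => by fun_prop)
    (integrable_pow_succ_mul_exp_neg_mul hμ hmin n hc) fun x t =>
      ((((hasDerivAt_neg x).mul_const t).exp).const_mul (t ^ (n + 1))).congr_deriv (by ring)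

theorem hasDerivAt_integral_one_sub_exp {c : ℝ} (hc : 0 < c) :
    HasDerivAt (fun x => ∫ t, (1 - exp (-x * t)) ∂μ) (∫ t, t * exp (-c * t) ∂μ) c := by
  simpa using hasDerivAt_integral_of_hasDerivAt_pow_succ_mul_exp hμ hmin
    (F := fun x t => 1 - exp (-x * t)) 1 0 hc
    (fun _ => by fun_prop) (integrable_one_sub_exp_neg_mul hμ hmin hc.le) fun x t =>
      ((((hasDerivAt_neg x).mul_const t).exp).const_sub 1).congr_deriv (by ring)

theorem iteratedDeriv_integral_pow_succ_mul_exp (n m : ℕ) {c : ℝ} (hc : 0 < c) :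
    iteratedDeriv m (fun x => ∫ t, t ^ (n + 1) * exp (-x * t) ∂μ) c
      = (-1) ^ m * ∫ t, t ^ (n + m + 1) * exp (-c * t) ∂μ := by
  induction m generalizing c with
  | zero => simp
  | succ m ih =>
    have hev : iteratedDeriv m (fun x => ∫ t, t ^ (n + 1) * exp (-x * t) ∂μ)
        =ᶠ[𝓝 c] fun x => (-1) ^ m * ∫ t, t ^ (n + m + 1) * exp (-x * t) ∂μ :=
      eventually_gt_nhds hc |>.mono fun x hx => ih hx
    rw [iteratedDeriv_succ, hev.deriv_eq,
      ((hasDerivAt_integral_pow_succ_mul_exp hμ hmin (n + m) hc).const_mul _).deriv,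
      pow_succ, show n + (m + 1) + 1 = n + m + 2 by ring]
    ring

theorem completelyMonotoneAt_const_add_integral_mul_exp {β : ℝ} (hβ : 0 ≤ β) {c : ℝ}
    (hc : 0 < c) : CompletelyMonotoneAt (fun x => β + ∫ t, t * exp (-x * t) ∂μ) c := by
  have hint_nonneg (k : ℕ) : 0 ≤ ∫ t, t ^ k * exp (-c * t) ∂μ :=
    integral_nonneg_of_ae (hμ.mono fun t ht => by positivity)
  rintro (_ | n)
  · simpa using add_nonneg hβ (by simpa using hint_nonneg 1)
  · have h := iteratedDeriv_integral_pow_succ_mul_exp hμ hmin 0 (n + 1) hc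
    simp only [zero_add, pow_one] at h
    rw [iteratedDeriv_const_add n.succ_pos, h, ← mul_assoc, ← pow_add,
      Even.neg_one_pow ⟨_, rfl⟩, one_mul]
    exact hint_nonneg _

end Laplace

theorem bernstein_analytic_extension_sign_conditions_general
    (β : ℝ) (hβ : 0 ≤ β)
    (ρ : Measure ℝ)
    (hρint : ∫⁻ t in Set.Ioi (0 : ℝ), ENNReal.ofReal (min t 1) ∂ρ < ⊤)
    (f : ℝ → ℝ)
    (hf : ∀ lam : ℝ, 0 < lam →
      f lam = β * lam + ∫ t in Set.Ioi (0 : ℝ), (1 - Real.exp (-lam * t)) ∂ρ)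
    (α : ℝ)
    (g : ℝ → ℝ)
    (hg : AnalyticOnNhd ℝ g (Set.Ioi (-α)))
    (hgf : ∀ lam : ℝ, 0 < lam → g lam = f lam) :
    ∀ k : ℕ, 1 ≤ k → ∀ x ∈ Set.Ioi (-α), 0 ≤ (-1 : ℝ) ^ (k + 1) * iteratedDeriv k g x := by
  intro k hk x hx
  obtain ⟨n, rfl⟩ := Nat.exists_eq_add_of_le' hk
  set μ := ρ.restrict (Ioi 0)
  have hμ : ∀ᵐ t ∂μ, 0 ≤ t := (ae_restrict_mem measurableSet_Ioi).mono fun _ ht => le_of_lt ht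
  have hmin : Integrable (fun t => min t 1) μ :=
    ⟨by fun_prop, (hasFiniteIntegral_iff_ofReal (hμ.mono fun t ht => le_min ht zero_le_one)).2
      hρint⟩
  have hg_eq : ∀ y ∈ Ioi (0 : ℝ), g =ᶠ[𝓝 y] fun x => β * x + ∫ t, (1 - exp (-x * t)) ∂μ :=
    fun y hy => eventually_gt_nhds hy |>.mono fun z hz => (hgf z hz).trans (hf z hz)
  have hderiv : ∀ y ∈ Ioi (0 : ℝ), deriv g =ᶠ[𝓝 y] fun x => β + ∫ t, t * exp (-x * t) ∂μ :=
    fun y hy => eventually_gt_nhds hy |>.mono fun z hz => by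
      rw [(hg_eq z hz).deriv_eq]
      simpa using (((hasDerivAt_id z).const_mul β).fun_add
        (hasDerivAt_integral_one_sub_exp hμ hmin hz)).deriv
  have hcm : ∀ y ∈ Ioi (0 : ℝ), CompletelyMonotoneAt (deriv g) y := fun y hy =>
    (completelyMonotoneAt_const_add_integral_mul_exp hμ hmin hβ hy).congr_of_eventuallyEq
      (hderiv y hy)
  have := hg.deriv.completelyMonotoneAt_of_forall_gt hcm x hx n
  rwa [iteratedDeriv_succ', show (-1 : ℝ) ^ (n + 1 + 1) = (-1) ^ n by ring]

/-- The derivative sign conditions of a Bernstein function propagate to any real-analytic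
extension to the left of `0`: if `g` is real-analytic on `(-α, ∞)` and agrees with the
Bernstein function `f` on `(0, ∞)`, then `(-1)^{k+1} g^{(k)}(x) ≥ 0` for all `k ≥ 1` and
all `x ∈ (-α, ∞)`. -/
theorem bernstein_analytic_extension_sign_conditions
    (β : ℝ) (hβ : 0 ≤ β)
    (ρ : Measure ℝ) (hρsupp : ρ (Set.Iic 0) = 0)
    (hρint : ∫⁻ t in Set.Ioi (0 : ℝ), ENNReal.ofReal (min t 1) ∂ρ < ⊤)
    (f : ℝ → ℝ)
    (hf : ∀ lam : ℝ, 0 < lam →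
      f lam = β * lam + ∫ t in Set.Ioi (0 : ℝ), (1 - Real.exp (-lam * t)) ∂ρ)
    (α : ℝ) (hα : 0 < α)
    (g : ℝ → ℝ)
    (hg : AnalyticOnNhd ℝ g (Set.Ioi (-α)))
    (hgf : ∀ lam : ℝ, 0 < lam → g lam = f lam) :
    ∀ k : ℕ, 1 ≤ k → ∀ x ∈ Set.Ioi (-α), 0 ≤ (-1 : ℝ) ^ (k + 1) * iteratedDeriv k g x :=
  bernstein_analytic_extension_sign_conditions_general β hβ ρ hρint f hf α g hg hgf
end

section
/- Let n ≥ 1, t > 0, and let u : ℝⁿ → ℝ be a bounded continuous function. Define v : ℝⁿ → ℝ by v(x) = (2πt)^{-n/2} ∫_{ℝⁿ} u(y) · exp(−|x−y|²/(2t)) dy (the heat semigroup applied to u). If v vanishes on some nonempty open subset of ℝⁿ, then v vanishes identically on ℝⁿ. In particular, the semigroup generated by Brownian motion satisfies the unique continuation principle, even though its generator (1/2)Δ, being a local operator, does not. -/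
/-!
Fix `x₀` in the open set and a target point `x = x₀ + d`. Completing the square along the line
`s ↦ x₀ + s • d` writes the Gaussian convolution there as `exp (-s² ‖d‖² / 2t)` times
`∫ g y · exp (s B y) dy`, with `g` a Gaussian times `u` and `B` affine. The latter integral makes
sense for complex `s`, since `g` has Gaussian decay, and is an entire function of `s`. It vanishes
for real `s` near `0`, hence everywhere by the identity theorem, in particular at `s = 1`.
-/

open MeasureTheory Real Filter Topology
open scoped RealInnerProductSpace

section ExpIntegral

variable {α : Type*} [MeasurableSpace α] {μ : Measure α} {g : α → ℂ} {B : α → ℝ}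

lemma integrable_norm_mul_exp_mul_abs (hg : AEStronglyMeasurable g μ) (hB : AEMeasurable B μ)
    (h : ∀ c : ℝ, Integrable (fun y => ‖g y‖ * rexp (c * B y)) μ) (c : ℝ) :
    Integrable (fun y => ‖g y‖ * rexp (c * |B y|)) μ := by
  refine ((h c).add (h (-c))).mono' (by fun_prop) (ae_of_all _ fun y => ?_)
  have hcB : c * |B y| ≤ |c * B y| := by
    rw [abs_mul]; exact mul_le_mul_of_nonneg_right (le_abs_self c) (abs_nonneg _)
  rw [norm_mul, norm_norm, Real.norm_of_nonneg (exp_nonneg _), Pi.add_apply, ← mul_add, neg_mul]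
  exact mul_le_mul_of_nonneg_left ((exp_le_exp.2 hcB).trans (exp_abs_le _)) (norm_nonneg _)

theorem differentiable_integral_mul_cexp_mul (hg : AEStronglyMeasurable g μ)
    (hB : AEMeasurable B μ) (h : ∀ c : ℝ, Integrable (fun y => ‖g y‖ * rexp (c * B y)) μ) :
    Differentiable ℂ fun z : ℂ => ∫ y, g y * Complex.exp (z * B y) ∂μ := by
  intro z₀
  have hnorm : ∀ (z : ℂ) y, ‖Complex.exp (z * B y)‖ = rexp (z.re * B y) := by
    simp [Complex.norm_exp]
  have hmeas : ∀ z : ℂ, AEStronglyMeasurable (fun y => g y * Complex.exp (z * B y)) μ :=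
    fun z => hg.mul (by fun_prop)
  refine (hasDerivAt_integral_of_dominated_loc_of_deriv_le
    (F' := fun z y => g y * (Complex.exp (z * B y) * B y))
    (bound := fun y => ‖g y‖ * rexp ((‖z₀‖ + 2) * |B y|)) (Metric.ball_mem_nhds z₀ one_pos)
    (.of_forall hmeas) ?_ ?_ ?_ (integrable_norm_mul_exp_mul_abs hg hB h _) ?_).2.differentiableAt
  · exact (h z₀.re).mono' (hmeas z₀) (ae_of_all _ fun y => by rw [norm_mul, hnorm])
  · exact hg.mul (by fun_prop)
  · refine ae_of_all _ fun y z hz => ?_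
    have hz : ‖z‖ ≤ ‖z₀‖ + 1 := by
      have := norm_le_norm_add_norm_sub' z z₀
      rw [Metric.mem_ball, dist_eq_norm] at hz
      linarith
    have hre : z.re * B y ≤ (‖z₀‖ + 1) * |B y| := by
      calc z.re * B y ≤ |z.re| * |B y| := by rw [← abs_mul]; exact le_abs_self _
        _ ≤ (‖z₀‖ + 1) * |B y| := by gcongr; exact (Complex.abs_re_le_norm z).trans hz
    calc ‖g y * (Complex.exp (z * B y) * B y)‖ = ‖g y‖ * (rexp (z.re * B y) * |B y|) := by
          rw [norm_mul, norm_mul, hnorm, Complex.norm_real, Real.norm_eq_abs]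
      _ ≤ ‖g y‖ * (rexp ((‖z₀‖ + 1) * |B y|) * rexp |B y|) := by
          gcongr
          linarith [add_one_le_exp |B y|]
      _ = ‖g y‖ * rexp ((‖z₀‖ + 2) * |B y|) := by rw [← exp_add]; ring_nf
  · refine ae_of_all _ fun y z _ => ?_
    simpa using (((hasDerivAt_id z).mul_const (B y : ℂ)).cexp.const_mul (g y))

end ExpIntegral

theorem Differentiable.eq_zero_of_eventually_ofReal_eq_zero {E : Type*} [NormedAddCommGroup E]
    [NormedSpace ℂ E] [CompleteSpace E] {F : ℂ → E} (hF : Differentiable ℂ F)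
    (h : ∀ᶠ s : ℝ in 𝓝 0, F s = 0) (z : ℂ) : F z = 0 := by
  have hofReal : Tendsto ((↑) : ℝ → ℂ) (𝓝[≠] 0) (𝓝[≠] 0) :=
    Complex.continuous_ofReal.continuousWithinAt.tendsto_nhdsWithin fun _ _ => by simp_all
  have hfreq : ∃ᶠ w in 𝓝[≠] (0 : ℂ), F w = 0 :=
    hofReal.frequently (h.filter_mono nhdsWithin_le_nhds).frequently
  have hF_an : AnalyticOnNhd ℂ F Set.univ := hF.differentiableOn.analyticOnNhd isOpen_univ
  exact hF_an.eqOn_zero_of_preconnected_of_frequently_eq_zero isPreconnected_univ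
    (Set.mem_univ 0) hfreq (Set.mem_univ z)

section Gaussian

variable {V : Type*} [NormedAddCommGroup V] [InnerProductSpace ℝ V] [FiniteDimensional ℝ V]
  [MeasurableSpace V] [BorelSpace V]

lemma integrable_exp_neg_mul_sq_norm_add_inner {b : ℝ} (hb : 0 < b) (c : ℝ) (w : V) :
    Integrable fun v : V => rexp (-b * ‖v‖ ^ 2 + c * ⟪w, v⟫) := by
  convert (GaussianFourier.integrable_cexp_neg_mul_sq_norm_add (b := b) (by simpa) c w).re
    using 2 with v
  rw [← Complex.exp_ofReal_re]
  push_cast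
  rfl

noncomputable def gaussianConv (t : ℝ) (u : V → ℝ) (x : V) : ℝ :=
  ∫ y, u y * rexp (-‖x - y‖ ^ 2 / (2 * t))

lemma gaussianConv_add_smul (t : ℝ) (u : V → ℝ) (x d : V) (s : ℝ) :
    gaussianConv t u (x + s • d) = rexp (-(s ^ 2 * ‖d‖ ^ 2) / (2 * t)) *
      ∫ y, u y * rexp (-‖x - y‖ ^ 2 / (2 * t)) * rexp (s * (⟪d, y - x⟫ / t)) := by
  rw [gaussianConv, ← integral_const_mul]
  congr 1 with y
  have hsq : ‖x + s • d - y‖ ^ 2 = ‖x - y‖ ^ 2 - 2 * (s * ⟪d, y - x⟫) + s ^ 2 * ‖d‖ ^ 2 := by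
    rw [show x + s • d - y = (x - y) + s • d by abel, norm_add_sq_real, inner_smul_right,
      norm_smul, mul_pow, Real.norm_eq_abs, sq_abs, ← neg_sub y x, inner_neg_left, real_inner_comm]
    ring
  rw [hsq, mul_assoc, ← exp_add, mul_left_comm (rexp _), ← exp_add]
  congr 2
  ring

lemma integrable_bounded_mul_gaussian_mul_exp_inner {t : ℝ} (ht : 0 < t) {u : V → ℝ}
    (hu : AEStronglyMeasurable u) {M : ℝ} (hM : ∀ y, |u y| ≤ M) (x d : V) (c : ℝ) :
    Integrable fun y => |u y| * rexp (-‖x - y‖ ^ 2 / (2 * t)) * rexp (c * (⟪d, y - x⟫ / t)) := by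
  have hgauss := ((integrable_exp_neg_mul_sq_norm_add_inner (by positivity : 0 < 1 / (2 * t))
    (c / t) d).comp_sub_right x).const_mul M
  refine hgauss.mono' (by fun_prop) (ae_of_all _ fun y => ?_)
  simp only [norm_mul, Real.norm_eq_abs, abs_abs, abs_of_nonneg (exp_nonneg _)]
  rw [mul_assoc, ← exp_add, norm_sub_rev]
  refine mul_le_mul (hM y) (le_of_eq ?_) (exp_nonneg _) ((abs_nonneg _).trans (hM y))
  ring_nf

theorem gaussianConv_eq_zero_of_eventually_eq_zero {t : ℝ} (ht : 0 < t) {u : V → ℝ}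
    (hu : AEStronglyMeasurable u) {M : ℝ} (hM : ∀ y, |u y| ≤ M) {x₀ : V}
    (h : ∀ᶠ x in 𝓝 x₀, gaussianConv t u x = 0) (x : V) : gaussianConv t u x = 0 := by
  set d := x - x₀
  set g : V → ℝ := fun y => u y * rexp (-‖x₀ - y‖ ^ 2 / (2 * t))
  set B : V → ℝ := fun y => ⟪d, y - x₀⟫ / t
  set F : ℂ → ℂ := fun z => ∫ y, (g y : ℂ) * Complex.exp (z * B y)
  have hF_ofReal : ∀ s : ℝ, F s = ((∫ y, g y * rexp (s * B y) : ℝ) : ℂ) := fun s => by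
    rw [← integral_complex_ofReal]
    push_cast
    rfl
  have hF : Differentiable ℂ F := by
    refine differentiable_integral_mul_cexp_mul (by fun_prop) (by fun_prop) fun c => ?_
    simpa only [g, B, Complex.norm_real, Real.norm_eq_abs, abs_mul,
      abs_of_nonneg (exp_nonneg _)] using
      integrable_bounded_mul_gaussian_mul_exp_inner ht hu hM x₀ d c
  have hF0 : ∀ᶠ s : ℝ in 𝓝 0, F s = 0 := by
    have hpath : Tendsto (fun s : ℝ => x₀ + s • d) (𝓝 0) (𝓝 x₀) :=
      (continuous_const.add (continuous_id.smul continuous_const) :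
        Continuous fun s : ℝ => x₀ + s • d).tendsto' 0 x₀ (by simp)
    filter_upwards [hpath.eventually h] with s hs
    rw [gaussianConv_add_smul, mul_eq_zero] at hs
    rw [hF_ofReal, hs.resolve_left (exp_pos _).ne', Complex.ofReal_zero]
  have h1 := hF.eq_zero_of_eventually_ofReal_eq_zero hF0 1
  rw [← Complex.ofReal_one, hF_ofReal, Complex.ofReal_eq_zero] at h1
  rw [show x = x₀ + (1 : ℝ) • d by simp [d], gaussianConv_add_smul, h1, mul_zero]

end Gaussian

theorem heat_semigroup_ucp_general
    (n : ℕ) (t : ℝ) (ht : 0 < t)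
    (u : EuclideanSpace ℝ (Fin n) → ℝ)
    (hu : Continuous u) (hub : ∃ M : ℝ, ∀ x, |u x| ≤ M)
    (v : EuclideanSpace ℝ (Fin n) → ℝ)
    (hv : ∀ x : EuclideanSpace ℝ (Fin n),
      v x = (2 * π * t) ^ (-(n : ℝ) / 2) *
        ∫ y : EuclideanSpace ℝ (Fin n), u y * Real.exp (-‖x - y‖ ^ 2 / (2 * t)))
    (G : Set (EuclideanSpace ℝ (Fin n))) (hG : IsOpen G) (hGne : G.Nonempty)
    (hvG : ∀ x ∈ G, v x = 0) :
    v = 0 := by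
  obtain ⟨M, hM⟩ := hub
  obtain ⟨x₀, hx₀⟩ := hGne
  have hC : (2 * π * t) ^ (-(n : ℝ) / 2) ≠ 0 := (rpow_pos_of_pos (by positivity) _).ne'
  have hG0 : ∀ᶠ x in 𝓝 x₀, gaussianConv t u x = 0 := by
    filter_upwards [hG.mem_nhds hx₀] with x hx
    simpa [hv, hC, gaussianConv] using hvG x hx
  funext x
  rw [hv, Pi.zero_apply]
  exact mul_eq_zero_of_right _
    (gaussianConv_eq_zero_of_eventually_eq_zero ht hu.aestronglyMeasurable hM hG0 x)

/-- The heat semigroup satisfies the unique continuation principle: if `u` is bounded and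
continuous and `v = p_t * u` (convolution with the Gaussian kernel) vanishes on some nonempty
open set, then `v ≡ 0`. -/
theorem heat_semigroup_ucp
    (n : ℕ) (hn : 1 ≤ n) (t : ℝ) (ht : 0 < t)
    (u : EuclideanSpace ℝ (Fin n) → ℝ)
    (hu : Continuous u) (hub : ∃ M : ℝ, ∀ x, |u x| ≤ M)
    (v : EuclideanSpace ℝ (Fin n) → ℝ)
    (hv : ∀ x : EuclideanSpace ℝ (Fin n),
      v x = (2 * π * t) ^ (-(n : ℝ) / 2) *
        ∫ y : EuclideanSpace ℝ (Fin n), u y * Real.exp (-‖x - y‖ ^ 2 / (2 * t)))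
    (G : Set (EuclideanSpace ℝ (Fin n))) (hG : IsOpen G) (hGne : G.Nonempty)
    (hvG : ∀ x ∈ G, v x = 0) :
    v = 0 :=
  heat_semigroup_ucp_general n t ht u hu hub v hv G hG hGne hvG
end

section
/- Let n ≥ 1 and let ν : ℤⁿ \ {0} → [0,∞) be a weight function (a Lévy measure on the lattice) whose support {j : ν(j) > 0} is infinite. Then for every h > 0 there exists a finitely supported function u : ℤⁿ → ℝ with u ≠ 0 such that u(k) = 0 for all k ∈ ℤⁿ with |k| ≤ h, and Σ_{j∈ℤⁿ\{0}} u(k+j)·ν(j) = 0 for all k ∈ ℤⁿ with |k| ≤ h (each such sum has only finitely many nonzero terms since u is finitely supported). In other words, the unique continuation property relative to the bounded set B_h(0) ∩ ℤⁿ always fails for discrete Lévy operators whose Lévy measure has infinite support. -/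
/-!
The lattice points of the ball form a finite set `B`. Looking for `u` supported off `B`, the
conditions `Σ_j u(k + j) ν(j) = 0` for `k ∈ B` are `|B|` homogeneous linear equations in the
values of `u` on the infinite set `Bᶜ`, so the vectors `(ν(m - k))_{k ∈ B}`, `m ∈ Bᶜ`, are
linearly dependent, and a nontrivial dependence is the required `u`.
-/

open Finset

lemma Int.mem_Icc_neg_ceil_of_sq_le {z : ℤ} {r : ℝ} (hz : (z : ℝ) ^ 2 ≤ r) :
    z ∈ Set.Icc (-⌈r⌉) ⌈r⌉ := by
  have hsq : z ^ 2 ≤ ⌈r⌉ := by exact_mod_cast hz.trans (Int.le_ceil r)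
  constructor <;> linarith [Int.le_self_sq z, Int.le_self_sq (-z), neg_sq z]

lemma finite_setOf_sum_sq_le {ι : Type*} [Fintype ι] (r : ℝ) :
    {k : ι → ℤ | ∑ i, (k i : ℝ) ^ 2 ≤ r}.Finite := by
  refine (Set.Finite.pi' fun _ => Set.finite_Icc (-⌈r⌉) ⌈r⌉).subset fun k hk i => ?_
  refine Int.mem_Icc_neg_ceil_of_sq_le (le_trans ?_ hk)
  exact single_le_sum (f := fun i => (k i : ℝ) ^ 2) (fun i _ => sq_nonneg _) (mem_univ i)

lemma exists_linearCombination_eq_zero_of_infinite {R M α : Type*} [Ring R]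
    [StrongRankCondition R] [AddCommGroup M] [Module R M] [Module.Finite R M]
    (v : α → M) {s : Set α} (hs : s.Infinite) :
    ∃ f : α →₀ R, f ∈ Finsupp.supported R R s ∧ Finsupp.linearCombination R v f = 0 ∧ f ≠ 0 :=
  have : Infinite s := hs.to_subtype
  linearDepOn_iff'.mp (Module.Finite.not_linearIndependent_of_infinite _)

lemma Finsupp.tsum_apply_add_mul {G : Type*} [AddCommGroup G] (f : G →₀ ℝ) (g : G → ℝ)
    (k : G) : ∑' j, f (k + j) * g j = ∑ m ∈ f.support, f m * g (m - k) := by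
  rw [← (Equiv.addLeft k).symm.tsum_eq, tsum_eq_sum (s := f.support)]
  · simp [neg_add_eq_sub]
  · intro m hm
    simp [Finsupp.notMem_support_iff.mp hm]

theorem discrete_levy_bounded_ucp_fails_general
    (n : ℕ) (hn : 1 ≤ n)
    (ν : (Fin n → ℤ) → ℝ)
    (h : ℝ) :
    ∃ u : (Fin n → ℤ) → ℝ,
      (Function.support u).Finite ∧ u ≠ 0 ∧
      (∀ k : Fin n → ℤ, (∑ i, ((k i : ℝ)) ^ 2) ≤ h ^ 2 → u k = 0) ∧
      (∀ k : Fin n → ℤ, (∑ i, ((k i : ℝ)) ^ 2) ≤ h ^ 2 →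
        ∑' j : Fin n → ℤ, u (k + j) * ν j = 0) := by
  have : Nonempty (Fin n) := ⟨⟨0, hn⟩⟩
  set B := {k : Fin n → ℤ | ∑ i, (k i : ℝ) ^ 2 ≤ h ^ 2}
  have hB : B.Finite := finite_setOf_sum_sq_le (h ^ 2)
  have : Finite B := hB.to_subtype
  obtain ⟨f, hfB, hf, hf0⟩ := exists_linearCombination_eq_zero_of_infinite (R := ℝ)
    (fun m (k : B) => ν (m - k)) hB.infinite_compl
  refine ⟨f, f.hasFiniteSupport, DFunLike.coe_injective.ne hf0, fun k hk => ?_, fun k hk => ?_⟩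
  · exact Finsupp.notMem_support_iff.mp fun hfk => hfB hfk hk
  · simpa [Finsupp.tsum_apply_add_mul, Finsupp.linearCombination_apply, Finsupp.sum]
      using congr_fun hf ⟨k, hk⟩

/-- The unique continuation property relative to a bounded set always fails for discrete
Lévy operators whose Lévy measure has infinite support: for every `h > 0` there is a nonzero
finitely supported `u : ℤⁿ → ℝ` with `u(k) = 0` and `Σ_j u(k+j)·ν(j) = 0` for every lattice
point `k` with `|k| ≤ h`. -/
theorem discrete_levy_bounded_ucp_fails
    (n : ℕ) (hn : 1 ≤ n)
    (ν : (Fin n → ℤ) → ℝ)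
    (hν0 : ν 0 = 0) (hνnn : ∀ j, 0 ≤ ν j)
    (hνinf : {j : Fin n → ℤ | ν j ≠ 0}.Infinite)
    (h : ℝ) (hh : 0 < h) :
    ∃ u : (Fin n → ℤ) → ℝ,
      (Function.support u).Finite ∧ u ≠ 0 ∧
      (∀ k : Fin n → ℤ, (∑ i, ((k i : ℝ)) ^ 2) ≤ h ^ 2 → u k = 0) ∧
      (∀ k : Fin n → ℤ, (∑ i, ((k i : ℝ)) ^ 2) ≤ h ^ 2 →
        ∑' j : Fin n → ℤ, u (k + j) * ν j = 0) :=
  discrete_levy_bounded_ucp_fails_general n hn ν h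
end
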